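/- arXiv:2502.14794 — 8 statements merged into one kernel-verified Lean document; each statement's English description precedes it below -/
import Mathlib

section
/- Let F be a d-regular graph on n vertices (d ≥ 3) such that every subgraph F̃ ⊂ F with 3 ≤ |V(F̃)| ≤ n−3 has edge boundary of size at least d+1. Define Δ = d+1 if d is odd and Δ = d+2 if d is even. Then every induced subgraph F̃ of F with at least 3 vertices whose edge boundary has size exactly Δ has minimum degree at least d/2. -/
open SimpleGraph

/-- The edge boundary of a subgraph `H` of `G`: edges of `G` with one endpoint in `H.verts`
and the other outside. -/
def edgeBoundary {V : Type*} (G : SimpleGraph V) (H : G.Subgraph) : Set (Sym2 V) :=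
  {e | ∃ u v, e = s(u, v) ∧ G.Adj u v ∧ u ∈ H.verts ∧ v ∉ H.verts}

/-- `G` is `d`-regular. -/
def IsRegularGraph {V : Type*} (G : SimpleGraph V) (d : ℕ) : Prop :=
  ∀ v, (G.neighborSet v).ncard = d

/-- `G` on `n` vertices is locally sparse: every subgraph on between 3 and `n - 3`
vertices has edge boundary of size at least `d + 1`. -/
def LocallySparse {n : ℕ} (G : SimpleGraph (Fin n)) (d : ℕ) : Prop :=
  ∀ H : G.Subgraph, 3 ≤ H.verts.ncard → H.verts.ncard ≤ n - 3 →
    d + 1 ≤ (edgeBoundary G H).ncard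

/-- `Δ = d + 1` for odd `d`, `Δ = d + 2` for even `d`. -/
def Delta (d : ℕ) : ℕ := if Odd d then d + 1 else d + 2

/-- A closed subgraph: an induced subgraph whose edge boundary has size exactly `Δ`. -/
def IsClosedSubgraph {V : Type*} (G : SimpleGraph V) (d : ℕ) (H : G.Subgraph) : Prop :=
  H.IsInduced ∧ (edgeBoundary G H).ncard = Delta d

/-!
Write `k` for the degree of `v` in `H`. Deleting `v` from an induced subgraph `H` of a `d`-regular
graph changes the size of the edge boundary from `|∂H|` to `|∂H| - d + 2k`. If `|H| ≥ 4`, then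
`H - v` still has between `3` and `n - 3` vertices (a boundary of size `Δ > d` needs two vertices
outside `H`), so local sparsity gives `Δ - d + 2k ≥ d + 1`, which is `2k ≥ d` once the parity of
`d` in `Δ` is taken into account. If `|H| = 3`, local sparsity says nothing; instead
`|∂H| = 3d - 2e(H)` has the parity of `d`, which excludes odd `d`, and for even `d ≥ 4` the two
other vertices have degree at most `2`, so `2d - 2 = 2e(H) ≤ k + 4`, i.e. `k ≥ 2d - 6 ≥ d / 2`.
-/

theorem Delta_add_mod_two (d : ℕ) : Delta d + d % 2 = d + 2 := by
  rcases Nat.even_or_odd d with hd | hd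
  · simp [Delta, Nat.not_odd_iff_even.mpr hd, Nat.even_iff.mp hd]
  · simp [Delta, hd, Nat.odd_iff.mp hd]

namespace SimpleGraph

variable {V : Type*} {G : SimpleGraph V} {H : G.Subgraph}

theorem Subgraph.IsInduced.neighborSet_inter_verts (hH : H.IsInduced) {u : V}
    (hu : u ∈ H.verts) : G.neighborSet u ∩ H.verts = H.neighborSet u := by
  ext w
  exact ⟨fun ⟨hadj, hw⟩ ↦ hH hu hw hadj, fun h ↦ ⟨H.adj_sub h, h.snd_mem⟩⟩

variable [Fintype V]

open scoped Classical

theorem edgeBoundary_ncard_eq_sum (H : G.Subgraph) :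
    (edgeBoundary G H).ncard = ∑ u ∈ H.verts.toFinset, (G.neighborSet u \ H.verts).ncard := by
  have hB : (edgeBoundary G H).toFinset = H.verts.toFinset.biUnion
      fun u ↦ (G.neighborSet u \ H.verts).toFinset.image fun w ↦ s(u, w) := by
    ext e
    simp only [Set.mem_toFinset, Finset.mem_biUnion, Finset.mem_image, Set.mem_sdiff,
      mem_neighborSet]
    constructor
    · rintro ⟨u, w, rfl, hadj, hu, hw⟩
      exact ⟨u, hu, w, ⟨hadj, hw⟩, rfl⟩
    · rintro ⟨u, hu, w, ⟨hadj, hw⟩, rfl⟩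
      exact ⟨u, w, rfl, hadj, hu, hw⟩
  rw [Set.ncard_eq_toFinset_card', hB, Finset.card_biUnion]
  · refine Finset.sum_congr rfl fun u _ ↦ ?_
    rw [Finset.card_image_of_injective _ fun _ _ ↦ Sym2.congr_right.mp,
      ← Set.ncard_eq_toFinset_card']
  · intro u hu u' _ hne
    simp only [Finset.disjoint_left, Finset.mem_image, Set.mem_toFinset, Set.mem_sdiff]
    rintro e ⟨w, ⟨-, hw⟩, rfl⟩ ⟨w', ⟨-, hw'⟩, heq⟩
    rcases Sym2.eq_iff.mp heq with ⟨h, -⟩ | ⟨-, h⟩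
    · exact hne h.symm
    · exact hw' (h ▸ Set.mem_toFinset.mp hu)

theorem edgeBoundary_ncard_le_sum_compl (H : G.Subgraph) :
    (edgeBoundary G H).ncard ≤ ∑ w ∈ H.vertsᶜ.toFinset, (G.neighborSet w).ncard := by
  have hB : (edgeBoundary G H).toFinset ⊆ H.vertsᶜ.toFinset.biUnion
      fun w ↦ (G.neighborSet w).toFinset.image fun u ↦ s(u, w) := by
    intro e he
    obtain ⟨u, w, rfl, hadj, -, hw⟩ := Set.mem_toFinset.mp he
    simp only [Finset.mem_biUnion, Finset.mem_image, Set.mem_toFinset]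
    exact ⟨w, hw, u, hadj.symm, rfl⟩
  rw [Set.ncard_eq_toFinset_card']
  refine (Finset.card_le_card hB).trans (Finset.card_biUnion_le.trans ?_)
  refine Finset.sum_le_sum fun w _ ↦ ?_
  rw [Set.ncard_eq_toFinset_card']
  exact Finset.card_image_le

theorem Subgraph.IsInduced.ncard_neighborSet_diff_verts_add (hH : H.IsInduced) {u : V}
    (hu : u ∈ H.verts) :
    (G.neighborSet u \ H.verts).ncard + (H.neighborSet u).ncard = (G.neighborSet u).ncard := by
  rw [← hH.neighborSet_inter_verts hu, add_comm, Set.ncard_inter_add_ncard_sdiff_eq_ncard]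

theorem Subgraph.IsInduced.edgeBoundary_ncard_add_sum (hH : H.IsInduced) :
    (edgeBoundary G H).ncard + ∑ u ∈ H.verts.toFinset, (H.neighborSet u).ncard
      = ∑ u ∈ H.verts.toFinset, (G.neighborSet u).ncard := by
  rw [edgeBoundary_ncard_eq_sum, ← Finset.sum_add_distrib]
  exact Finset.sum_congr rfl fun u hu ↦
    hH.ncard_neighborSet_diff_verts_add (Set.mem_toFinset.mp hu)

theorem Subgraph.even_sum_ncard_neighborSet (H : G.Subgraph) :
    Even (∑ u ∈ H.verts.toFinset, (H.neighborSet u).ncard) := by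
  have hdeg (u : V) : H.spanningCoe.degree u = (H.neighborSet u).ncard := by
    rw [← card_neighborSet_eq_degree, Set.fintypeCard_eq_ncard]
    rfl
  have hsum : ∑ u ∈ H.verts.toFinset, (H.neighborSet u).ncard
      = ∑ u, H.spanningCoe.degree u := by
    simp only [hdeg]
    refine Finset.sum_subset (Finset.subset_univ _) fun u _ hu ↦ ?_
    exact (Set.ncard_eq_zero (Set.toFinite _)).mpr <|
      Set.eq_empty_of_forall_notMem fun _ hw ↦ hu (Set.mem_toFinset.mpr hw.fst_mem)
  rw [hsum, sum_degrees_eq_twice_card_edges]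
  exact even_two_mul _

theorem ncard_neighborSet_diff_diff_singleton [DecidableRel G.Adj] {S : Set V} {u v : V}
    (hv : v ∈ S) :
    (G.neighborSet u \ (S \ {v})).ncard
      = (G.neighborSet u \ S).ncard + if G.Adj u v then 1 else 0 := by
  split_ifs with hadj
  · rw [← Set.ncard_insert_of_notMem fun h ↦ h.2 hv]
    congr 1
    ext w
    by_cases hw : w = v <;> simp [hw, hadj]
  · congr 1
    ext w
    by_cases hw : w = v <;> simp [hw, hadj]

theorem edgeBoundary_deleteVerts_singleton_ncard_add (H : G.Subgraph) {v : V}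
    (hv : v ∈ H.verts) :
    (edgeBoundary G (H.deleteVerts {v})).ncard + (G.neighborSet v \ H.verts).ncard
      = (edgeBoundary G H).ncard + (G.neighborSet v ∩ H.verts).ncard := by
  have hverts : (H.deleteVerts {v}).verts.toFinset = H.verts.toFinset.erase v := by
    ext; simp [and_comm]
  have hadj : ((H.verts.toFinset.erase v).filter (G.Adj · v)).card
      = (G.neighborSet v ∩ H.verts).ncard := by
    rw [Set.ncard_eq_toFinset_card']
    congr 1
    ext u
    simp only [Finset.mem_filter, Finset.mem_erase, Set.mem_toFinset, Set.mem_inter_iff,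
      mem_neighborSet]
    exact ⟨fun ⟨⟨_, hu⟩, h⟩ ↦ ⟨h.symm, hu⟩, fun ⟨h, hu⟩ ↦ ⟨⟨h.ne', hu⟩, h.symm⟩⟩
  rw [edgeBoundary_ncard_eq_sum, edgeBoundary_ncard_eq_sum, hverts, Subgraph.deleteVerts_verts,
    Finset.sum_congr rfl fun u _ ↦ ncard_neighborSet_diff_diff_singleton hv,
    Finset.sum_add_distrib, Finset.sum_boole, Nat.cast_id, hadj,
    ← Finset.add_sum_erase _ _ (Set.mem_toFinset.mpr hv)]
  ring

theorem Subgraph.ncard_neighborSet_lt_ncard_verts {u : V} (hu : u ∈ H.verts) :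
    (H.neighborSet u).ncard < H.verts.ncard :=
  Set.ncard_lt_ncard <| (H.neighborSet_subset_verts u).ssubset_of_mem_notMem hu fun h ↦
    (H.adj_sub h).ne rfl

theorem Subgraph.IsInduced.edgeBoundary_deleteVerts_singleton_ncard_add (hH : H.IsInduced)
    {v : V} (hv : v ∈ H.verts) :
    (edgeBoundary G (H.deleteVerts {v})).ncard + (G.neighborSet v).ncard
      = (edgeBoundary G H).ncard + 2 * (H.neighborSet v).ncard := by
  have hdel := SimpleGraph.edgeBoundary_deleteVerts_singleton_ncard_add H hv
  have hdiff := hH.ncard_neighborSet_diff_verts_add hv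
  rw [hH.neighborSet_inter_verts hv] at hdel
  omega

end SimpleGraph

section Regular

variable {V : Type*} [Fintype V] {G : SimpleGraph V} {d : ℕ} {H : G.Subgraph}

open scoped Classical

theorem IsRegularGraph.edgeBoundary_ncard_le (hreg : IsRegularGraph G d) (H : G.Subgraph) :
    (edgeBoundary G H).ncard ≤ d * H.vertsᶜ.ncard := by
  calc (edgeBoundary G H).ncard
      ≤ ∑ w ∈ H.vertsᶜ.toFinset, (G.neighborSet w).ncard := edgeBoundary_ncard_le_sum_compl H
    _ = d * H.vertsᶜ.ncard := by
      rw [Finset.sum_congr rfl fun w _ ↦ hreg w, Finset.sum_const, smul_eq_mul, mul_comm,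
        Set.ncard_eq_toFinset_card']

theorem IsRegularGraph.edgeBoundary_ncard_add_sum (hreg : IsRegularGraph G d)
    (hH : H.IsInduced) :
    (edgeBoundary G H).ncard + ∑ u ∈ H.verts.toFinset, (H.neighborSet u).ncard
      = d * H.verts.ncard := by
  rw [hH.edgeBoundary_ncard_add_sum, Finset.sum_congr rfl fun u _ ↦ hreg u, Finset.sum_const,
    smul_eq_mul, mul_comm, Set.ncard_eq_toFinset_card']

theorem IsClosedSubgraph.ncard_verts_add_two_le (hreg : IsRegularGraph G d)
    (hH : IsClosedSubgraph G d H) : H.verts.ncard + 2 ≤ Fintype.card V := by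
  have hbound := hreg.edgeBoundary_ncard_le H
  have hΔ : d + 1 ≤ (edgeBoundary G H).ncard := by
    have := Delta_add_mod_two d
    rw [hH.2]
    omega
  have hcompl : 2 ≤ H.vertsᶜ.ncard := by
    by_contra! h
    interval_cases H.vertsᶜ.ncard <;> omega
  have := Set.ncard_add_ncard_compl H.verts
  rw [Nat.card_eq_fintype_card] at this
  omega

theorem IsClosedSubgraph.le_two_mul_ncard_neighborSet_of_ncard_verts_eq_three (hd : 3 ≤ d)
    (hreg : IsRegularGraph G d) (hH : IsClosedSubgraph G d H) (h3 : H.verts.ncard = 3)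
    {v : V} (hv : v ∈ H.verts) : d ≤ 2 * (H.neighborSet v).ncard := by
  have hsum := hreg.edgeBoundary_ncard_add_sum hH.1
  obtain ⟨m, hm⟩ := H.even_sum_ncard_neighborSet
  have hrest : ∑ u ∈ H.verts.toFinset.erase v, (H.neighborSet u).ncard ≤ 2 * 2 := by
    have hcard : (H.verts.toFinset.erase v).card = 2 := by
      rw [Finset.card_erase_of_mem (Set.mem_toFinset.mpr hv), ← Set.ncard_eq_toFinset_card', h3]
    refine (Finset.sum_le_card_nsmul _ _ 2 fun u hu ↦ ?_).trans_eq (by rw [hcard, smul_eq_mul])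
    have := H.ncard_neighborSet_lt_ncard_verts (Set.mem_toFinset.mp (Finset.mem_of_mem_erase hu))
    omega
  rw [← Finset.add_sum_erase _ _ (Set.mem_toFinset.mpr hv)] at hsum hm
  rw [hH.2, h3] at hsum
  have := Delta_add_mod_two d
  omega

end Regular

theorem IsClosedSubgraph.le_two_mul_ncard_neighborSet_of_four_le {n d : ℕ}
    {G : SimpleGraph (Fin n)} (hreg : IsRegularGraph G d) (hls : LocallySparse G d)
    {H : G.Subgraph} (hH : IsClosedSubgraph G d H) (h4 : 4 ≤ H.verts.ncard)
    {v : Fin n} (hv : v ∈ H.verts) : d ≤ 2 * (H.neighborSet v).ncard := by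
  have hsmall := hH.ncard_verts_add_two_le hreg
  rw [Fintype.card_fin] at hsmall
  have hdel_card : (H.deleteVerts {v}).verts.ncard + 1 = H.verts.ncard :=
    Set.ncard_sdiff_singleton_add_one hv
  have hsparse := hls (H.deleteVerts {v}) (by omega) (by omega)
  have hdel := hH.1.edgeBoundary_deleteVerts_singleton_ncard_add hv
  rw [hreg v, hH.2] at hdel
  have := Delta_add_mod_two d
  omega

/-- Every closed subgraph of a locally sparse `d`-regular graph with at least 3 vertices
has minimum degree at least `d / 2`. -/
theorem closed_subgraph_min_degree {n d : ℕ} (hd : 3 ≤ d) (G : SimpleGraph (Fin n))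
    (hreg : IsRegularGraph G d) (hls : LocallySparse G d)
    (H : G.Subgraph) (hH : IsClosedSubgraph G d H) (h3 : 3 ≤ H.verts.ncard) :
    ∀ v ∈ H.verts, d ≤ 2 * (H.neighborSet v).ncard := by
  intro v hv
  rcases h3.eq_or_lt with h3 | h4
  · exact hH.le_two_mul_ncard_neighborSet_of_ncard_verts_eq_three hd hreg h3.symm hv
  · exact hH.le_two_mul_ncard_neighborSet_of_four_le hreg hls h4 hv
end

section
/- Let F be a d-regular locally sparse graph on [n]. For any pair of adjacent vertices x, y in F and any integer v with 3 ≤ v ≤ n−3, there are at most two closed subgraphs of F on v vertices that contain x and do not contain y. -/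
open SimpleGraph

/-!
Write `∂S` for the number of edges leaving a vertex set `S`. For vertex sets `A`, `B`,
`∂A + ∂B = ∂(A \ B) + ∂(B \ A) + 2 e(A ∩ B, (A ∪ B)ᶜ)`, and local sparsity together with a
parity argument gives `∂S ≥ Δ` whenever `2 ≤ |S| ≤ n - 3`. Hence two distinct closed `v`-sets
containing `x` and avoiding `y` differ in exactly one vertex each, and then
`e(A ∩ B, (A ∪ B)ᶜ) = Δ - d ≤ 2`. Three such sets either share a common `(v - 1)`-core or lie in a
common `(v + 1)`-set, and the second case is the first one for the complements (with `x`, `y`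
swapped). In the first case the third set is the core plus a vertex `c` outside `A ∪ B` which
sends at least `d / 2 ≥ 2` edges into the core; with the edge `xy` this gives
`e(A ∩ B, (A ∪ B)ᶜ) ≥ 3`.
-/

open Finset

namespace SimpleGraph

section Interedges

variable {V : Type*} {G : SimpleGraph V} [DecidableRel G.Adj]

theorem card_interedges_comm (s t : Finset V) :
    #(G.interedges s t) = #(G.interedges t s) :=
  have := G.symm
  Rel.card_interedges_comm s t

theorem card_interedges_union_left [DecidableEq V] {s₁ s₂ : Finset V} (h : Disjoint s₁ s₂)
    (t : Finset V) :
    #(G.interedges (s₁ ∪ s₂) t) = #(G.interedges s₁ t) + #(G.interedges s₂ t) := by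
  rw [← card_union_of_disjoint (G.interedges_disjoint_left h t)]
  congr 1
  ext
  simp only [mem_interedges_iff, mem_union]
  tauto

theorem card_interedges_union_right [DecidableEq V] (s : Finset V) {t₁ t₂ : Finset V}
    (h : Disjoint t₁ t₂) :
    #(G.interedges s (t₁ ∪ t₂)) = #(G.interedges s t₁) + #(G.interedges s t₂) := by
  rw [card_interedges_comm, card_interedges_union_left h, card_interedges_comm t₁,
    card_interedges_comm t₂]

theorem one_le_card_interedges {s t : Finset V} {u w : V} (hu : u ∈ s) (hw : w ∈ t)
    (huw : G.Adj u w) : 1 ≤ #(G.interedges s t) :=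
  card_pos.mpr ⟨(u, w), G.mk_mem_interedges_iff.mpr ⟨hu, hw, huw⟩⟩

theorem interedges_singleton_self (a : V) : G.interedges {a} {a} = ∅ := by
  ext ⟨u, w⟩
  simp only [mem_interedges_iff, mem_singleton, notMem_empty, iff_false]
  rintro ⟨rfl, rfl, h⟩
  exact G.loopless.irrefl _ h

theorem card_interedges_singleton_univ [Fintype V] (a : V) :
    #(G.interedges {a} univ) = G.degree a := by
  have h : G.interedges {a} univ =
      (G.neighborFinset a).map ⟨Prod.mk a, Prod.mk_right_injective a⟩ := by
    ext ⟨u, w⟩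
    simp only [mem_interedges_iff, mem_singleton, mem_univ, true_and, mem_map,
      mem_neighborFinset, Function.Embedding.coeFn_mk, Prod.mk.injEq]
    constructor
    · rintro ⟨rfl, huw⟩; exact ⟨w, huw, rfl, rfl⟩
    · rintro ⟨w, huw, rfl, rfl⟩; exact ⟨rfl, huw⟩
  rw [h, card_map, card_neighborFinset_eq_degree]

end Interedges

variable {V : Type*} [Fintype V] [DecidableEq V] (G : SimpleGraph V) [DecidableRel G.Adj]

def cutSize (s : Finset V) : ℕ := #(G.interedges s sᶜ)

variable {G}

theorem ncard_edgeBoundary {H : G.Subgraph} {s : Finset V} (hs : H.verts = s) :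
    (edgeBoundary G H).ncard = G.cutSize s := by
  have himage : edgeBoundary G H =
      (fun p : V × V => s(p.1, p.2)) '' (G.interedges s sᶜ : Set (V × V)) := by
    ext e
    simp only [edgeBoundary, hs, Set.mem_ofPred_eq, Set.mem_image, mem_coe, mem_interedges_iff,
      mem_compl, Prod.exists]
    constructor
    · rintro ⟨u, w, rfl, huw, hu, hw⟩; exact ⟨u, w, ⟨hu, hw, huw⟩, rfl⟩
    · rintro ⟨u, w, ⟨hu, hw, huw⟩, rfl⟩; exact ⟨u, w, rfl, huw, hu, hw⟩
  rw [himage, Set.InjOn.ncard_image, Set.ncard_coe_finset, cutSize]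
  rintro ⟨u, w⟩ hp ⟨u', w'⟩ hp' he
  simp only [mem_coe, mem_interedges_iff, mem_compl] at hp hp'
  rcases Sym2.eq_iff.mp he with ⟨rfl, rfl⟩ | ⟨rfl, rfl⟩
  · rfl
  · exact absurd hp.1 hp'.2.1

theorem cutSize_compl (s : Finset V) : G.cutSize sᶜ = G.cutSize s := by
  rw [cutSize, compl_compl, card_interedges_comm, cutSize]

theorem cutSize_union_add {s t : Finset V} (h : Disjoint s t) :
    G.cutSize (s ∪ t) + 2 * #(G.interedges s t) = G.cutSize s + G.cutSize t := by
  have hst : ∀ z, z ∈ s → z ∉ t := fun _ hz => Finset.disjoint_left.mp h hz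
  have hs : sᶜ = t ∪ (s ∪ t)ᶜ := by
    ext z; have := hst z; simp only [mem_compl, mem_union]; tauto
  have ht : tᶜ = s ∪ (s ∪ t)ᶜ := by
    ext z; have := hst z; simp only [mem_compl, mem_union]; tauto
  have hsR : Disjoint t (s ∪ t)ᶜ := disjoint_compl_right.mono_left subset_union_right
  have htR : Disjoint s (s ∪ t)ᶜ := disjoint_compl_right.mono_left subset_union_left
  rw [cutSize, card_interedges_union_left h, cutSize, hs, card_interedges_union_right _ hsR,
    cutSize, ht, card_interedges_union_right _ htR, card_interedges_comm t s]
  ring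

theorem cutSize_add_cutSize (A B : Finset V) :
    G.cutSize A + G.cutSize B =
      G.cutSize (A \ B) + G.cutSize (B \ A) + 2 * #(G.interedges (A ∩ B) (A ∪ B)ᶜ) := by
  have hA := cutSize_union_add (G := G) (disjoint_sdiff_inter A B)
  have hB := cutSize_union_add (G := G) (disjoint_sdiff_inter B A)
  rw [sdiff_union_inter] at hA
  rw [sdiff_union_inter, inter_comm] at hB
  have hI : (A ∩ B)ᶜ = (A \ B) ∪ ((B \ A) ∪ (A ∪ B)ᶜ) := by
    ext z; simp only [mem_compl, mem_union, mem_inter, mem_sdiff]; tauto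
  have hPQ : Disjoint (A \ B) (B \ A) := disjoint_sdiff_sdiff
  have hPR : Disjoint (A \ B) (A ∪ B)ᶜ :=
    disjoint_compl_right.mono_left (sdiff_subset.trans subset_union_left)
  have hQR : Disjoint (B \ A) (A ∪ B)ᶜ :=
    disjoint_compl_right.mono_left (sdiff_subset.trans subset_union_right)
  have hcut : G.cutSize (A ∩ B) = #(G.interedges (A \ B) (A ∩ B)) +
      #(G.interedges (B \ A) (A ∩ B)) + #(G.interedges (A ∩ B) (A ∪ B)ᶜ) := by
    rw [cutSize, hI, card_interedges_union_right _ (disjoint_union_right.mpr ⟨hPQ, hPR⟩),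
      card_interedges_union_right _ hQR, card_interedges_comm (A ∩ B),
      card_interedges_comm (A ∩ B) (B \ A)]
    ring
  omega

variable {d : ℕ}

theorem IsRegularOfDegree.cutSize_singleton (hreg : G.IsRegularOfDegree d) (a : V) :
    G.cutSize {a} = d := by
  have h := card_interedges_union_right (G := G) {a}
    (disjoint_compl_right (a := ({a} : Finset V)))
  rw [union_compl, card_interedges_singleton_univ, hreg.degree_eq, interedges_singleton_self,
    card_empty, zero_add] at h
  exact h.symm

theorem IsRegularOfDegree.cutSize_insert (hreg : G.IsRegularOfDegree d) {a : V} {s : Finset V}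
    (ha : a ∉ s) : G.cutSize (insert a s) + 2 * #(G.interedges {a} s) = G.cutSize s + d := by
  rw [insert_eq, cutSize_union_add (disjoint_singleton_left.mpr ha), hreg.cutSize_singleton,
    add_comm]

theorem IsRegularOfDegree.even_cutSize (hreg : G.IsRegularOfDegree d) (hd : Even d)
    (s : Finset V) : Even (G.cutSize s) := by
  induction s using Finset.induction_on with
  | empty => simp [cutSize]
  | insert a s ha ih =>
    have h := hreg.cutSize_insert ha
    obtain ⟨m, hm⟩ := ih
    obtain ⟨k, hk⟩ := hd
    exact ⟨m + k - #(G.interedges {a} s), by omega⟩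

theorem IsRegularOfDegree.two_mul_le_cutSize_pair (hreg : G.IsRegularOfDegree d) {a b : V}
    (hab : a ≠ b) : 2 * d ≤ G.cutSize {a, b} + 2 := by
  have h := hreg.cutSize_insert (s := {b}) (notMem_singleton.mpr hab)
  have hle : #(G.interedges {a} {b}) ≤ 1 := (G.card_interedges_le_mul _ _).trans (by simp)
  rw [hreg.cutSize_singleton] at h
  omega

end SimpleGraph

theorem Finset.subset_union_or_inter_subset {α : Type*} [DecidableEq α] {A B C : Finset α}
    (hBA : (B \ A).Nonempty) (hCA : #(C \ A) ≤ 1) (hBC : #(B \ C) ≤ 1) :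
    C ⊆ A ∪ B ∨ A ∩ B ⊆ C := by
  by_contra! h
  obtain ⟨c, hcC, hcAB⟩ := not_subset.mp h.1
  obtain ⟨p, hpAB, hpC⟩ := not_subset.mp h.2
  obtain ⟨b, hb⟩ := hBA
  obtain ⟨hbB, hbA⟩ := mem_sdiff.mp hb
  rw [mem_union, not_or] at hcAB
  rw [mem_inter] at hpAB
  by_cases hbC : b ∈ C
  · have hbc := card_le_one.mp hCA b (mem_sdiff.mpr ⟨hbC, hbA⟩) c (mem_sdiff.mpr ⟨hcC, hcAB.1⟩)
    exact hcAB.2 (hbc ▸ hbB)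
  · have hbp := card_le_one.mp hBC b (mem_sdiff.mpr ⟨hbB, hbC⟩) p (mem_sdiff.mpr ⟨hpAB.2, hpC⟩)
    exact hbA (hbp ▸ hpAB.1)

open SimpleGraph

theorem Delta_le_add_two (d : ℕ) : Delta d ≤ d + 2 := by
  unfold Delta; split_ifs <;> omega

theorem Delta_le_of_lt {d m : ℕ} (h : d < m) (hpar : Even d → Even m) : Delta d ≤ m := by
  unfold Delta
  split_ifs with hd
  · omega
  · obtain ⟨k, hk⟩ := hpar (Nat.not_odd_iff_even.mp hd)
    obtain ⟨j, hj⟩ := Nat.not_odd_iff_even.mp hd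
    omega

theorem IsRegularGraph.isRegularOfDegree {V : Type*} [Fintype V] {G : SimpleGraph V}
    [DecidableRel G.Adj] {d : ℕ} (hreg : IsRegularGraph G d) : G.IsRegularOfDegree d := by
  intro v
  rw [← card_neighborFinset_eq_degree, ← hreg v, Set.ncard_eq_toFinset_card']
  rfl

/-- `s` spans a closed subgraph on `k` vertices that contains `u` but not `w`. -/
def IsClosedSeparating {n : ℕ} (G : SimpleGraph (Fin n)) [DecidableRel G.Adj] (d k : ℕ)
    (u w : Fin n) (s : Finset (Fin n)) : Prop :=
  G.cutSize s = Delta d ∧ #s = k ∧ u ∈ s ∧ w ∉ s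

section LocallySparse

variable {n d k : ℕ} {G : SimpleGraph (Fin n)} [DecidableRel G.Adj]

theorem IsClosedSeparating.compl {u w : Fin n} {s : Finset (Fin n)}
    (hs : IsClosedSeparating G d k u w s) : IsClosedSeparating G d (n - k) w u sᶜ := by
  obtain ⟨hcut, hcard, hu, hw⟩ := hs
  refine ⟨by rw [cutSize_compl, hcut], ?_, mem_compl.mpr hw, notMem_compl.mpr hu⟩
  rw [card_compl, Fintype.card_fin, hcard]

variable (hd : 3 ≤ d) (hreg : G.IsRegularOfDegree d) (hls : LocallySparse G d)
include hd hreg hls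

theorem lt_cutSize {s : Finset (Fin n)} (h2 : 2 ≤ #s) (hs : #s ≤ n - 3) : d < G.cutSize s := by
  rcases h2.eq_or_lt with hs2 | hs3
  · obtain ⟨a, b, hab, rfl⟩ := card_eq_two.mp hs2.symm
    have := hreg.two_mul_le_cutSize_pair hab
    omega
  · have h := hls ((⊤ : G.Subgraph).induce s) (by simpa using Nat.succ_le_of_lt hs3)
      (by simpa using hs)
    rwa [ncard_edgeBoundary rfl, Nat.add_one_le_iff] at h

theorem Delta_le_cutSize {s : Finset (Fin n)} (h2 : 2 ≤ #s) (hs : #s ≤ n - 3) :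
    Delta d ≤ G.cutSize s :=
  Delta_le_of_lt (lt_cutSize hd hreg hls h2 hs) (fun he => hreg.even_cutSize he s)

theorem card_sdiff_eq_one_of_isClosedSeparating {u w : Fin n} {A B : Finset (Fin n)}
    (hA : IsClosedSeparating G d k u w A) (hB : IsClosedSeparating G d k u w B)
    (hk : k ≤ n - 3) (hAB : A ≠ B) (huw : G.Adj u w) : #(A \ B) = 1 := by
  obtain ⟨hcutA, hcardA, huA, hwA⟩ := hA
  obtain ⟨hcutB, hcardB, huB, hwB⟩ := hB
  have hsizeA := card_sdiff_add_card_inter A B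
  have hsizeB := card_sdiff_add_card_inter B A
  rw [inter_comm] at hsizeB
  have hI : 1 ≤ #(A ∩ B) := card_pos.mpr ⟨u, mem_inter.mpr ⟨huA, huB⟩⟩
  have hne : #(A \ B) ≠ 0 := fun h0 =>
    hAB (eq_of_subset_of_card_le (sdiff_eq_empty_iff_subset.mp (card_eq_zero.mp h0)) (by omega))
  have hR : 1 ≤ #(G.interedges (A ∩ B) (A ∪ B)ᶜ) :=
    one_le_card_interedges (mem_inter.mpr ⟨huA, huB⟩) (by simp [hwA, hwB]) huw
  have hpair := cutSize_add_cutSize (G := G) A B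
  by_contra h1
  have hP := Delta_le_cutSize hd hreg hls (s := A \ B) (by omega) (by omega)
  have hQ := Delta_le_cutSize hd hreg hls (s := B \ A) (by omega) (by omega)
  omega

theorem not_inter_subset_of_isClosedSeparating {u w : Fin n} {A B C : Finset (Fin n)}
    (hA : IsClosedSeparating G d k u w A) (hB : IsClosedSeparating G d k u w B)
    (hC : IsClosedSeparating G d k u w C) (hk3 : 3 ≤ k) (hk : k ≤ n - 3)
    (hAB : A ≠ B) (hCA : C ≠ A) (hCB : C ≠ B) (huw : G.Adj u w) : ¬ A ∩ B ⊆ C := by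
  intro hI
  have hAB1 := card_sdiff_eq_one_of_isClosedSeparating hd hreg hls hA hB hk hAB huw
  have hBA1 := card_sdiff_eq_one_of_isClosedSeparating hd hreg hls hB hA hk hAB.symm huw
  obtain ⟨a, ha⟩ := card_eq_one.mp hAB1
  obtain ⟨b, hb⟩ := card_eq_one.mp hBA1
  have hIcard : #(A ∩ B) + 1 = k := by
    rw [← hA.2.1, ← card_sdiff_add_card_inter A B, hAB1, add_comm]
  have hcutI := Delta_le_cutSize hd hreg hls (s := A ∩ B) (by omega) (by omega)
  obtain ⟨c, hc⟩ := card_eq_one.mp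
    (show #(C \ (A ∩ B)) = 1 by rw [card_sdiff_of_subset hI, hC.2.1]; omega)
  have hcC : c ∈ C := (mem_sdiff.mp (hc ▸ mem_singleton_self c)).1
  have hc_notMem : ∀ X : Finset (Fin n), #X = k → C ≠ X → A ∩ B ⊆ X → c ∉ X := by
    intro X hX hCX hIX
    obtain ⟨c', hc'C, hc'X⟩ := not_subset.mp
      (fun h => hCX (eq_of_subset_of_card_le h (by rw [hX, hC.2.1])))
    have hc' : c' ∈ C \ (A ∩ B) := mem_sdiff.mpr ⟨hc'C, fun h => hc'X (hIX h)⟩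
    rw [hc, mem_singleton] at hc'
    exact hc' ▸ hc'X
  have hcA := hc_notMem A hA.2.1 hCA inter_subset_left
  have hcB := hc_notMem B hB.2.1 hCB inter_subset_right
  -- As `cutSize (A ∩ B) ≥ Δ = cutSize C`, `c` sends at least `d / 2` edges into `A ∩ B`; with `uw`
  -- these are more than the `Δ - d ≤ 2` edges from `A ∩ B` to `(A ∪ B)ᶜ`.
  have hCeq : C = insert c (A ∩ B) := by rw [insert_eq, ← hc, sdiff_union_of_subset hI]
  have hadd := hreg.cutSize_insert (s := A ∩ B) (fun h => hcA (mem_inter.mp h).1)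
  rw [← hCeq, hC.1] at hadd
  have hpair := cutSize_add_cutSize (G := G) A B
  rw [hA.1, hB.1, ha, hb, hreg.cutSize_singleton, hreg.cutSize_singleton] at hpair
  have hsub : {c} ∪ {w} ⊆ (A ∪ B)ᶜ := by
    intro z hz
    rcases mem_union.mp hz with hz | hz <;> rw [mem_singleton] at hz <;> subst hz <;>
      simp [hcA, hcB, hA.2.2.2, hB.2.2.2]
  have hcw : Disjoint ({c} : Finset (Fin n)) {w} :=
    disjoint_singleton.mpr (fun h => hC.2.2.2 (h ▸ hcC))
  have hmono := card_le_card (G.interedges_mono (subset_refl (A ∩ B)) hsub)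
  rw [card_interedges_union_right _ hcw, card_interedges_comm (A ∩ B) {c}] at hmono
  have hw :=
    one_le_card_interedges (mem_inter.mpr ⟨hA.2.2.1, hB.2.2.1⟩) (mem_singleton_self w) huw
  have := Delta_le_add_two d
  omega

theorem ncard_setOf_isClosedSeparating_le_two {u w : Fin n} (huw : G.Adj u w) (hk3 : 3 ≤ k)
    (hk : k ≤ n - 3) : {s | IsClosedSeparating G d k u w s}.ncard ≤ 2 := by
  by_contra! h
  obtain ⟨A, B, C, hA, hB, hC, hAB, hAC, hBC⟩ := (Set.two_lt_ncard_iff).mp h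
  have hsdiff := fun {X Y : Finset (Fin n)} (hX : IsClosedSeparating G d k u w X)
      (hY : IsClosedSeparating G d k u w Y) (hXY : X ≠ Y) =>
    card_sdiff_eq_one_of_isClosedSeparating hd hreg hls hX hY hk hXY huw
  rcases Finset.subset_union_or_inter_subset (card_pos.mp (hsdiff hB hA hAB.symm).ge)
      (hsdiff hC hA hAC.symm).le (hsdiff hB hC hBC).le with h | h
  · refine not_inter_subset_of_isClosedSeparating hd hreg hls hA.compl hB.compl hC.compl
      (by omega) (by omega) (compl_injective.ne hAB) (compl_injective.ne hAC.symm)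
      (compl_injective.ne hBC.symm) huw.symm ?_
    rw [← compl_union]
    exact compl_subset_compl.mpr h
  · exact not_inter_subset_of_isClosedSeparating hd hreg hls hA hB hC hk3 hk hAB hAC.symm
      hBC.symm huw h

end LocallySparse

/-- For adjacent `x, y` and `3 ≤ v ≤ n - 3`, there are at most two closed subgraphs of a
locally sparse `d`-regular graph on `v` vertices containing `x` and not `y`. -/
theorem at_most_two_closed_subgraphs {n d : ℕ} (hd : 3 ≤ d) (G : SimpleGraph (Fin n))
    (hreg : IsRegularGraph G d) (hls : LocallySparse G d)
    (x y : Fin n) (hxy : G.Adj x y) (v : ℕ) (h3 : 3 ≤ v) (hv : v ≤ n - 3) :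
    {H : G.Subgraph | IsClosedSubgraph G d H ∧ H.verts.ncard = v ∧
      x ∈ H.verts ∧ y ∉ H.verts}.ncard ≤ 2 := by
  classical
  refine le_trans
    (Set.ncard_le_ncard_of_injOn (fun H => H.verts.toFinset) ?_ ?_ (Set.toFinite _))
    (ncard_setOf_isClosedSeparating_le_two hd hreg.isRegularOfDegree hls hxy h3 hv)
  · rintro H ⟨⟨-, hcut⟩, hcard, hx, hy⟩
    refine ⟨?_, ?_, Set.mem_toFinset.mpr hx, fun h => hy (Set.mem_toFinset.mp h)⟩
    · rw [← ncard_edgeBoundary (Set.coe_toFinset _).symm, hcut]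
    · rw [← Set.ncard_eq_toFinset_card', hcard]
  · rintro H₁ ⟨⟨hind₁, -⟩, -⟩ H₂ ⟨⟨hind₂, -⟩, -⟩ h
    rw [← hind₁.induce_top_verts, ← hind₂.induce_top_verts, Set.toFinset_inj.mp h]
end

section
/- Let H_1 and H_2 be two distinct closed subgraphs of a d-regular locally sparse graph F, each on v vertices (3 ≤ v ≤ n/2), both containing a vertex x and neither containing a vertex y adjacent to x, and sharing at least one other common vertex so that |V(H_1) ∪ V(H_2)| ≤ n−2. Then the intersection H_0 = H_1 ∩ H_2 satisfies |E(H_0)| = (d/2)|V(H_0)| − Δ/2, i.e., H_0 is also closed. -/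
open SimpleGraph

/-!
The edge boundary is submodular: `|∂(S ∩ T)| + |∂(S ∪ T)| ≤ |∂S| + |∂T| = 2Δ`. Local sparsity
bounds both terms on the left below by `d + 1`: it extends to vertex sets of size `2` (which span at
most one edge, so have boundary at least `2d - 2 ≥ d + 1`) and to their complements. When `d` is
even every boundary is even by the degree count `2|E(S)| + |∂S| = d|S|`, so the bound rounds up to
`Δ`. Hence `|∂(S ∩ T)| = Δ`, and the degree count on `S ∩ T` gives the claim.
-/

theorem Delta_le_of_succ_le {d b : ℕ} (h : d + 1 ≤ b) (hpar : Even d → Even b) :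
    Delta d ≤ b := by
  unfold Delta
  split_ifs with hd
  · exact h
  · obtain ⟨k, rfl⟩ := Nat.not_odd_iff_even.mp hd
    obtain ⟨m, rfl⟩ := hpar ⟨k, rfl⟩
    omega

open Finset in
theorem Set.ncard_preimage_eq_mul {α β : Type*} [Finite α] {f : α → β} {s : Set β} {k : ℕ}
    (hs : s.Finite) (hfiber : ∀ b ∈ s, (f ⁻¹' {b}).ncard = k) :
    (f ⁻¹' s).ncard = k * s.ncard := by
  classical
  have := Fintype.ofFinite α
  rw [Set.ncard_eq_toFinset_card' (f ⁻¹' s), Set.ncard_eq_toFinset_card s hs,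
    card_eq_sum_card_fiberwise (f := f) (t := hs.toFinset) (fun a ha ↦ by simpa using ha),
    sum_const_nat fun b hb ↦ ?_, mul_comm]
  rw [← hfiber b (by simpa using hb), Set.ncard_eq_toFinset_card']
  congr 1
  ext a
  simp only [mem_filter, Set.mem_toFinset, Set.mem_preimage, Set.mem_singleton_iff,
    and_iff_right_iff_imp]
  rintro rfl
  simpa using hb

namespace SimpleGraph

variable {V : Type*} {G : SimpleGraph V}

theorem Subgraph.IsInduced.inf {H₁ H₂ : G.Subgraph} (h₁ : H₁.IsInduced) (h₂ : H₂.IsInduced) :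
    (H₁ ⊓ H₂).IsInduced :=
  fun _ hu _ hv hadj ↦ ⟨h₁ hu.1 hv.1 hadj, h₂ hu.2 hv.2 hadj⟩

theorem Subgraph.isInduced_induce_top (s : Set V) : ((⊤ : G.Subgraph).induce s).IsInduced :=
  fun _ hu _ hv hadj ↦ ⟨hu, hv, hadj⟩

theorem Subgraph.edgeSet_ncard_le_one_of_ncard_verts_eq_two {H : G.Subgraph}
    (hH : H.verts.ncard = 2) :
    H.edgeSet.ncard ≤ 1 := by
  obtain ⟨a, b, -, hab⟩ := Set.ncard_eq_two.mp hH
  have hsub : H.edgeSet ⊆ {s(a, b)} := by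
    intro e
    induction e using Sym2.ind with
    | _ u v =>
      intro huv
      rw [Subgraph.mem_edgeSet] at huv
      have hu := hab ▸ huv.fst_mem
      have hv := hab ▸ huv.snd_mem
      have hne := huv.ne
      simp only [Set.mem_insert_iff, Set.mem_singleton_iff] at hu hv ⊢
      rcases hu with rfl | rfl <;> rcases hv with rfl | rfl <;> simp_all [Sym2.eq_swap]
  simpa using Set.ncard_le_ncard hsub

theorem ncard_dart_edge_preimage [Finite V] {s : Set (Sym2 V)} (hs : s ⊆ G.edgeSet) :
    (Dart.edge ⁻¹' s : Set G.Dart).ncard = 2 * s.ncard := by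
  classical
  have := Fintype.ofFinite V
  refine Set.ncard_preimage_eq_mul s.toFinite fun e he ↦ ?_
  rw [← G.dart_edge_fiber_card e (hs he), ← Set.ncard_coe_finset]
  congr 1
  ext x
  simp

end SimpleGraph

section Boundary

variable {V : Type*} {G : SimpleGraph V}

theorem mk_mem_edgeBoundary {H : G.Subgraph} {u v : V} :
    s(u, v) ∈ edgeBoundary G H ↔ G.Adj u v ∧ ¬(u ∈ H.verts ↔ v ∈ H.verts) := by
  constructor
  · rintro ⟨a, b, hab, hadj, ha, hb⟩
    rcases Sym2.eq_iff.mp hab with ⟨rfl, rfl⟩ | ⟨rfl, rfl⟩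
    · exact ⟨hadj, by tauto⟩
    · exact ⟨hadj.symm, by tauto⟩
  · rintro ⟨hadj, huv⟩
    by_cases hu : u ∈ H.verts
    · exact ⟨u, v, rfl, hadj, hu, by tauto⟩
    · exact ⟨v, u, Sym2.eq_swap, hadj.symm, by tauto, hu⟩

theorem edgeBoundary_induce_top_compl (H : G.Subgraph) :
    edgeBoundary G ((⊤ : G.Subgraph).induce H.vertsᶜ) = edgeBoundary G H := by
  ext e
  induction e using Sym2.ind with
  | _ u v =>
    simp only [mk_mem_edgeBoundary, Subgraph.induce_verts, Set.mem_compl_iff]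
    tauto

theorem edgeBoundary_inf_ncard_add_edgeBoundary_sup_ncard_le [Finite V] (H₁ H₂ : G.Subgraph) :
    (edgeBoundary G (H₁ ⊓ H₂)).ncard + (edgeBoundary G (H₁ ⊔ H₂)).ncard ≤
      (edgeBoundary G H₁).ncard + (edgeBoundary G H₂).ncard := by
  rw [← Set.ncard_union_add_ncard_inter, ← Set.ncard_union_add_ncard_inter (edgeBoundary G H₁)]
  refine add_le_add (Set.ncard_le_ncard ?_) (Set.ncard_le_ncard ?_) <;>
  · intro e
    induction e using Sym2.ind with
    | _ u v =>
      simp only [Set.mem_union, Set.mem_inter_iff, mk_mem_edgeBoundary, Subgraph.verts_inf,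
        Subgraph.verts_sup]
      tauto

theorem edgeBoundary_eq_image_dart_edge (H : G.Subgraph) :
    edgeBoundary G H = Dart.edge '' {x : G.Dart | x.fst ∈ H.verts ∧ x.snd ∉ H.verts} := by
  ext e
  constructor
  · rintro ⟨u, v, rfl, hadj, hu, hv⟩
    exact ⟨⟨(u, v), hadj⟩, ⟨hu, hv⟩, rfl⟩
  · rintro ⟨x, ⟨hu, hv⟩, rfl⟩
    exact ⟨x.fst, x.snd, rfl, x.adj, hu, hv⟩

theorem ncard_edgeBoundary (H : G.Subgraph) :
    (edgeBoundary G H).ncard = {x : G.Dart | x.fst ∈ H.verts ∧ x.snd ∉ H.verts}.ncard := by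
  rw [edgeBoundary_eq_image_dart_edge, Set.InjOn.ncard_image]
  intro x hx y hy hxy
  rcases (dart_edge_eq_iff x y).mp hxy with h | rfl
  · exact h
  · exact absurd hx.1 hy.2

end Boundary

section Regular

variable {V : Type*} {G : SimpleGraph V} {d : ℕ}

theorem IsRegularGraph.degree_eq (hreg : IsRegularGraph G d) (v : V)
    [Fintype (G.neighborSet v)] : G.degree v = d := by
  rw [← card_neighborSet_eq_degree, ← Nat.card_eq_fintype_card, Nat.card_coe_set_eq, hreg v]

theorem IsRegularGraph.ncard_dart_fst_preimage [Finite V] (hreg : IsRegularGraph G d)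
    (s : Set V) : {x : G.Dart | x.fst ∈ s}.ncard = d * s.ncard := by
  classical
  have := Fintype.ofFinite V
  refine Set.ncard_preimage_eq_mul (f := fun x : G.Dart ↦ x.fst) s.toFinite fun v _ ↦ ?_
  rw [← hreg.degree_eq v, ← dart_fst_fiber_card_eq_degree, ← Set.ncard_coe_finset]
  congr 1
  ext x
  simp

/-- Among the darts leaving the vertices of `H`, those ending inside `H` come in pairs, one pair
per edge of `H`, and those ending outside are the boundary edges, oriented. -/
theorem IsRegularGraph.two_mul_edgeSet_ncard_add_edgeBoundary_ncard [Finite V]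
    (hreg : IsRegularGraph G d) {H : G.Subgraph} (hH : H.IsInduced) :
    2 * H.edgeSet.ncard + (edgeBoundary G H).ncard = d * H.verts.ncard := by
  classical
  have := Fintype.ofFinite V
  have hinner : {x : G.Dart | x.fst ∈ H.verts} ∩ {x | x.snd ∈ H.verts} =
      Dart.edge ⁻¹' H.edgeSet := by
    ext x
    exact ⟨fun h ↦ hH h.1 h.2 x.adj, fun h ↦ ⟨h.fst_mem, h.snd_mem⟩⟩
  rw [← ncard_dart_edge_preimage H.edgeSet_subset, ← hinner, ncard_edgeBoundary,
    ← hreg.ncard_dart_fst_preimage]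
  exact Set.ncard_inter_add_ncard_sdiff_eq_ncard _ _

theorem IsRegularGraph.two_mul_induce_edgeSet_ncard_add_edgeBoundary_ncard [Finite V]
    (hreg : IsRegularGraph G d) (H : G.Subgraph) :
    2 * ((⊤ : G.Subgraph).induce H.verts).edgeSet.ncard + (edgeBoundary G H).ncard =
      d * H.verts.ncard :=
  hreg.two_mul_edgeSet_ncard_add_edgeBoundary_ncard (Subgraph.isInduced_induce_top H.verts)

theorem IsRegularGraph.two_mul_le_edgeBoundary_ncard_add_two [Finite V]
    (hreg : IsRegularGraph G d) {H : G.Subgraph} (hH : H.verts.ncard = 2) :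
    2 * d ≤ (edgeBoundary G H).ncard + 2 := by
  have hsum := hreg.two_mul_induce_edgeSet_ncard_add_edgeBoundary_ncard H
  have hedges :=
    Subgraph.edgeSet_ncard_le_one_of_ncard_verts_eq_two (H := (⊤ : G.Subgraph).induce H.verts) hH
  rw [hH] at hsum
  omega

theorem IsRegularGraph.even_edgeBoundary_ncard [Finite V] (hreg : IsRegularGraph G d)
    (hd : Even d) (H : G.Subgraph) : Even (edgeBoundary G H).ncard := by
  have heven : Even (2 * _ + (edgeBoundary G H).ncard) :=
    hreg.two_mul_induce_edgeSet_ncard_add_edgeBoundary_ncard H ▸ hd.mul_right _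
  exact (Nat.even_add.mp heven).mp (even_two_mul _)

end Regular

theorem LocallySparse.Delta_le_edgeBoundary_ncard {n d : ℕ} {G : SimpleGraph (Fin n)}
    (hls : LocallySparse G d) (hreg : IsRegularGraph G d) (hd : 3 ≤ d) {H : G.Subgraph}
    (hH₂ : 2 ≤ H.verts.ncard) (hHn : H.verts.ncard ≤ n - 2) :
    Delta d ≤ (edgeBoundary G H).ncard := by
  refine Delta_le_of_succ_le ?_ (hreg.even_edgeBoundary_ncard · H)
  rcases hH₂.eq_or_lt with hH₂ | hH₃
  · have := hreg.two_mul_le_edgeBoundary_ncard_add_two hH₂.symm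
    omega
  rcases hHn.eq_or_lt with hHn | hHn
  · have hcompl : ((⊤ : G.Subgraph).induce H.vertsᶜ).verts.ncard = 2 := by
      have := Set.ncard_add_ncard_compl H.verts
      rw [Nat.card_fin] at this
      rw [Subgraph.induce_verts]
      omega
    have := hreg.two_mul_le_edgeBoundary_ncard_add_two hcompl
    rw [edgeBoundary_induce_top_compl] at this
    omega
  · exact hls H hH₃ (by omega)

theorem IsClosedSubgraph.inf {n d : ℕ} {G : SimpleGraph (Fin n)} (hls : LocallySparse G d)
    (hreg : IsRegularGraph G d) (hd : 3 ≤ d) {H₁ H₂ : G.Subgraph}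
    (hH₁ : IsClosedSubgraph G d H₁) (hH₂ : IsClosedSubgraph G d H₂)
    (hinter : 2 ≤ (H₁.verts ∩ H₂.verts).ncard) (hunion : (H₁.verts ∪ H₂.verts).ncard ≤ n - 2) :
    IsClosedSubgraph G d (H₁ ⊓ H₂) := by
  have hle : (H₁.verts ∩ H₂.verts).ncard ≤ (H₁.verts ∪ H₂.verts).ncard :=
    Set.ncard_le_ncard (Set.inter_subset_left.trans Set.subset_union_left)
  have hinf := hls.Delta_le_edgeBoundary_ncard hreg hd (H := H₁ ⊓ H₂) hinter (by
    rw [Subgraph.verts_inf]; omega)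
  have hsup := hls.Delta_le_edgeBoundary_ncard hreg hd (H := H₁ ⊔ H₂) (by
    rw [Subgraph.verts_sup]; omega) hunion
  have hsub := edgeBoundary_inf_ncard_add_edgeBoundary_sup_ncard_le H₁ H₂
  rw [hH₁.2, hH₂.2] at hsub
  exact ⟨hH₁.1.inf hH₂.1, by omega⟩

theorem intersection_of_closed_is_closed_general {n d : ℕ} (hd : 3 ≤ d) (G : SimpleGraph (Fin n))
    (hreg : IsRegularGraph G d) (hls : LocallySparse G d)
    (H₁ H₂ : G.Subgraph)
    (hH₁ : IsClosedSubgraph G d H₁) (hH₂ : IsClosedSubgraph G d H₂)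
    (x : Fin n)
    (hx₁ : x ∈ H₁.verts) (hx₂ : x ∈ H₂.verts)
    (hz : ∃ z, z ≠ x ∧ z ∈ H₁.verts ∧ z ∈ H₂.verts)
    (hun : (H₁.verts ∪ H₂.verts).ncard ≤ n - 2) :
    2 * ((H₁ ⊓ H₂).edgeSet.ncard) + Delta d = d * (H₁ ⊓ H₂).verts.ncard := by
  obtain ⟨z, hzx, hz₁, hz₂⟩ := hz
  have hinter : 2 ≤ (H₁.verts ∩ H₂.verts).ncard := by
    rw [← Set.ncard_pair hzx.symm]
    exact Set.ncard_le_ncard (Set.pair_subset ⟨hx₁, hx₂⟩ ⟨hz₁, hz₂⟩)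
  have hclosed := hH₁.inf hls hreg hd hH₂ hinter hun
  rw [← hclosed.2]
  exact hreg.two_mul_edgeSet_ncard_add_edgeBoundary_ncard hclosed.1

/-- If `H₁ ≠ H₂` are closed subgraphs on `v` vertices (`3 ≤ v ≤ n/2`) both containing `x`,
neither containing `y` (with `x` adjacent to `y`), sharing another common vertex so that
`|V(H₁) ∪ V(H₂)| ≤ n - 2`, then `H₀ = H₁ ⊓ H₂` satisfies `|E(H₀)| = (d/2)|V(H₀)| - Δ/2`,
i.e. `2|E(H₀)| + Δ = d|V(H₀)|`, so `H₀` is closed. -/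
theorem intersection_of_closed_is_closed {n d : ℕ} (hd : 3 ≤ d) (G : SimpleGraph (Fin n))
    (hreg : IsRegularGraph G d) (hls : LocallySparse G d)
    (H₁ H₂ : G.Subgraph) (hne : H₁ ≠ H₂)
    (hH₁ : IsClosedSubgraph G d H₁) (hH₂ : IsClosedSubgraph G d H₂)
    (v : ℕ) (h3 : 3 ≤ v) (hv : 2 * v ≤ n)
    (hv₁ : H₁.verts.ncard = v) (hv₂ : H₂.verts.ncard = v)
    (x y : Fin n) (hxy : G.Adj x y)
    (hx₁ : x ∈ H₁.verts) (hx₂ : x ∈ H₂.verts)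
    (hy₁ : y ∉ H₁.verts) (hy₂ : y ∉ H₂.verts)
    (hz : ∃ z, z ≠ x ∧ z ∈ H₁.verts ∧ z ∈ H₂.verts)
    (hun : (H₁.verts ∪ H₂.verts).ncard ≤ n - 2) :
    2 * ((H₁ ⊓ H₂).edgeSet.ncard) + Delta d = d * (H₁ ⊓ H₂).verts.ncard :=
  intersection_of_closed_is_closed_general hd G hreg hls H₁ H₂ hH₁ hH₂ x hx₁ hx₂ hz hun
end

section
/- Let F be a d-regular graph on [n] and let H ⊆ F be a subgraph with ℓ edges, x non-isolated vertices, and c connected components (excluding isolated vertices). Then the number of graphs F' on [n] isomorphic to F with H ⊆ F' is at most (n−x+c)! · (x/c)^c · d^ℓ / |Aut(F)|. -/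
open SimpleGraph

/-- The connected components of `J` that contain a non-isolated vertex. -/
def nontrivialComponents {V : Type*} (J : SimpleGraph V) : Set J.ConnectedComponent :=
  {C | ∃ v ∈ J.support, J.connectedComponentMk v = C}

/-!
A copy `F'` of `F` containing `H` is the image of `F` under exactly `|Aut F|` permutations, and
the inverse of each of them maps the edges of `H` into edges of `F`; so the left-hand side times
`|Aut F|` is at most the number of such permutations `σ`. Count them vertex by vertex: order the
components of `H` (isolated vertices included) by decreasing size, and each component outward from
a base vertex. The image of a base vertex only has to avoid the images of the earlier components;
any other vertex goes to one of the `d` neighbours of the image of a vertex closer to the base, and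
owns the edge to that vertex, so there are at most `ℓ` of them. With `t_K` the number of vertices
of `K` and of the later components, this gives `∏ t_K ⬝ d ^ ℓ`. As the sizes decrease, `t_K` is at
most `x / c` times the number of components from `K` on when `K` is one of the `c` nontrivial
components, and equal to that number when `K` is an isolated vertex; there are `n - x + c`
components, so `∏ t_K ≤ (x / c) ^ c ⬝ (n - x + c)!`.
-/

open Finset

theorem Finset.card_le_prod_of_card_image_le {α β κ : Type*} [Fintype α] [DecidableEq α]
    [DecidableEq β] [LinearOrder κ] (key : α → κ) (S : Finset (α → β)) (w : α → ℕ)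
    (hw : ∀ a, ∀ f ∈ S, #({g ∈ S | ∀ b, key b < key a → g b = f b}.image (· a)) ≤ w a) :
    #S ≤ ∏ a, w a := by
  have hfree : ∀ Q : Finset α, ∀ f ∈ S, #{g ∈ S | ∀ b ∉ Q, g b = f b} ≤ ∏ a ∈ Q, w a := by
    intro Q
    induction Q using Finset.induction_on_min_value key with
    | empty =>
      intro f _
      simpa using card_le_one.2 fun g hg g' hg' => by
        rw [mem_filter] at hg hg'
        exact funext fun b => (hg.2 b).trans (hg'.2 b).symm
    | insert a Q haQ hmin ih =>
      intro f hf
      rw [prod_insert haQ, mul_comm]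
      refine (card_le_mul_card_image (f := (· a)) _ _ fun y hy => ?_).trans
        (Nat.mul_le_mul_left _ ((card_le_card fun y hy => ?_).trans (hw a f hf)))
      · obtain ⟨g₀, hg₀, rfl⟩ := mem_image.1 hy
        rw [mem_filter] at hg₀
        refine (card_le_card fun g hg => ?_).trans (ih g₀ hg₀.1)
        simp only [mem_filter] at hg ⊢
        refine ⟨hg.1.1, fun b hb => ?_⟩
        by_cases hba : b = a
        · exact hba ▸ hg.2
        · have hb' : b ∉ insert a Q := by simp [hba, hb]
          exact (hg.1.2 b hb').trans (hg₀.2 b hb').symm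
      · obtain ⟨g, hg, rfl⟩ := mem_image.1 hy
        rw [mem_filter] at hg
        refine mem_image_of_mem _ (mem_filter.2 ⟨hg.1, fun b hb => hg.2 b ?_⟩)
        simp only [mem_insert, not_or]
        exact ⟨fun h => (h ▸ hb).false, fun h => (hmin b h).not_gt hb⟩
  rcases S.eq_empty_or_nonempty with rfl | ⟨f, hf⟩
  · simp
  · simpa using hfree univ f hf

theorem Finset.card_mul_sum_le_card_mul_sum {ι : Type*} [DecidableEq ι] (s : ι → ℕ)
    {A T : Finset ι} (hTA : T ⊆ A) (hs : ∀ t ∈ T, ∀ a ∈ A \ T, s t ≤ s a) :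
    #A * ∑ t ∈ T, s t ≤ #T * ∑ a ∈ A, s a := by
  have hcross : #(A \ T) * ∑ t ∈ T, s t ≤ #T * ∑ a ∈ A \ T, s a :=
    calc #(A \ T) * ∑ t ∈ T, s t = ∑ _a ∈ A \ T, ∑ t ∈ T, s t := by rw [sum_const, smul_eq_mul]
      _ ≤ ∑ a ∈ A \ T, ∑ _t ∈ T, s a := sum_le_sum fun a ha => sum_le_sum fun t ht => hs t ht a ha
      _ = #T * ∑ a ∈ A \ T, s a := by simp [mul_sum]
  rw [← card_sdiff_add_card_eq_card hTA, ← sum_sdiff hTA]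
  nlinarith

theorem Finset.prod_card_filter_le_eq_factorial {ι κ : Type*} [DecidableEq ι] [LinearOrder κ]
    (key : ι → κ) (hkey : Function.Injective key) (P : Finset ι) :
    ∏ i ∈ P, #{j ∈ P | key i ≤ key j} = (#P).factorial := by
  induction P using Finset.induction_on_min_value key with
  | empty => simp
  | insert a P haP hmin ih =>
    have hlt : ∀ i ∈ P, key a < key i := fun i hi =>
      (hmin i hi).lt_of_ne fun h => haP (hkey h ▸ hi)
    rw [prod_insert haP, card_insert_of_notMem haP, Nat.factorial_succ, ← ih,
      filter_true_of_mem fun j hj => ?_, card_insert_of_notMem haP]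
    · congr 1
      refine prod_congr rfl fun i hi => ?_
      rw [filter_insert, if_neg (hlt i hi).not_ge]
    · rcases mem_insert.1 hj with rfl | hj
      exacts [le_rfl, hmin j hj]

theorem exists_injective_antitone_key {ι : Type*} [Fintype ι] (s : ι → ℕ) :
    ∃ key : ι → ℕᵒᵈ ×ₗ ℕ, Function.Injective key ∧ ∀ i j, key i ≤ key j → s j ≤ s i := by
  refine ⟨fun i => toLex (OrderDual.toDual (s i), Fintype.equivFin ι i), fun i j h => ?_,
    fun i j h => ?_⟩
  · exact (Fintype.equivFin ι).injective (Fin.val_injective (congr_arg (fun p => (ofLex p).2) h))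
  · rcases Prod.Lex.toLex_le_toLex.1 h with h | ⟨h, -⟩
    exacts [h.le, (congr_arg OrderDual.ofDual h).ge]

section TailSums

variable {ι κ : Type*} [Fintype ι] [LinearOrder κ] {key : ι → κ} {s : ι → ℕ}

theorem sum_tail_le_card_tail (hs : ∀ i j, key i ≤ key j → s j ≤ s i) {i : ι} (hi : s i < 2) :
    ∑ j with key i ≤ key j, s j ≤ #{j | key i ≤ key j} :=
  (sum_le_card_nsmul _ s 1 fun j hj => by have := hs i j (mem_filter.1 hj).2; omega).trans
    (by simp)

variable [DecidableEq ι]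

theorem card_mul_sum_tail_le (hs : ∀ i j, key i ≤ key j → s j ≤ s i) (hpos : ∀ i, 0 < s i)
    (i : ι) :
    #{i | 2 ≤ s i} * ∑ j with key i ≤ key j, s j ≤
      (∑ i with 2 ≤ s i, s i) * #{j | key i ≤ key j} := by
  set A : Finset ι := {i | 2 ≤ s i}
  set U : Finset ι := {j | key i ≤ key j}
  have hsplit := sum_filter_add_sum_filter_not U (fun j => 2 ≤ s j) s
  have hcard := card_filter_add_card_filter_not (s := U) (fun j => 2 ≤ s j)
  have hsmall : ∑ j ∈ U with ¬ 2 ≤ s j, s j ≤ #{j ∈ U | ¬ 2 ≤ s j} :=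
    (sum_le_card_nsmul _ _ 1 fun j hj => by simp at hj; omega).trans (by simp)
  set T : Finset ι := {j ∈ U | 2 ≤ s j}
  have havg : #A * ∑ t ∈ T, s t ≤ #T * ∑ a ∈ A, s a :=
    card_mul_sum_le_card_mul_sum s (fun j hj => by simp_all [T, A]) fun t ht a ha => by
      simp only [T, U, A, mem_sdiff, mem_filter, mem_univ, true_and, not_and, not_le] at ht ha
      exact hs a t ((lt_of_not_ge fun h => (ha.2 h).not_ge ha.1).le.trans ht.1)
  have hxA : #A ≤ ∑ a ∈ A, s a := card_eq_sum_ones A ▸ sum_le_sum fun a _ => hpos a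
  rw [← hsplit, ← hcard]
  nlinarith [Nat.mul_le_mul_left #A hsmall, Nat.mul_le_mul_right #{j ∈ U | ¬ 2 ≤ s j} hxA]

theorem prod_sum_tail_le (hkey : Function.Injective key) (hs : ∀ i j, key i ≤ key j → s j ≤ s i)
    (hpos : ∀ i, 0 < s i) :
    ((∏ i, ∑ j with key i ≤ key j, s j : ℕ) : ℝ) ≤
      ((∑ i with 2 ≤ s i, s i : ℕ) / (#{i | 2 ≤ s i} : ℝ)) ^ #{i | 2 ≤ s i} *
        (Nat.card ι).factorial := by
  set A : Finset ι := {i | 2 ≤ s i}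
  set avg : ℝ := (∑ i ∈ A, s i : ℕ) / (#A : ℝ)
  have hpoint : ∀ i, ((∑ j with key i ≤ key j, s j : ℕ) : ℝ) ≤
      (if i ∈ A then avg else 1) * #{j | key i ≤ key j} := fun i => by
    split_ifs with hi
    · have hA : (0 : ℝ) < #A := Nat.cast_pos.2 (card_pos.2 ⟨i, hi⟩)
      rw [div_mul_eq_mul_div, le_div_iff₀ hA, mul_comm]
      exact_mod_cast card_mul_sum_tail_le hs hpos i
    · rw [one_mul]
      exact_mod_cast sum_tail_le_card_tail hs (by simpa [A] using hi)
  calc ((∏ i, ∑ j with key i ≤ key j, s j : ℕ) : ℝ)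
      ≤ ∏ i, (if i ∈ A then avg else 1) * (#{j | key i ≤ key j} : ℝ) := by
        push_cast
        exact prod_le_prod (fun i _ => by positivity) fun i _ => by exact_mod_cast hpoint i
    _ = avg ^ #A * (Nat.card ι).factorial := by
        rw [prod_mul_distrib, prod_ite_mem, univ_inter, prod_const, Nat.card_eq_fintype_card,
          ← card_univ, ← prod_card_filter_le_eq_factorial key hkey univ]
        push_cast
        rfl

end TailSums

namespace SimpleGraph

variable {V : Type*} (G : SimpleGraph V)

theorem Reachable.exists_adj_dist_lt {G : SimpleGraph V} {u v : V} (huv : G.Reachable u v)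
    (hne : u ≠ v) : ∃ w, G.Adj w v ∧ G.dist u w < G.dist u v := by
  obtain ⟨p, hp⟩ := huv.symm.exists_walk_length_eq_dist
  obtain ⟨w, hvw, q, rfl⟩ := p.exists_eq_cons_of_ne hne.symm
  refine ⟨w, hvw.symm, ?_⟩
  calc G.dist u w = G.dist w u := dist_comm
    _ ≤ q.length := dist_le q
    _ < (Walk.cons hvw q).length := by simp
    _ = G.dist u v := hp.trans dist_comm

theorem ConnectedComponent.connectedComponentMk_out (K : G.ConnectedComponent) :
    G.connectedComponentMk K.out = K :=
  Quot.out_eq K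

noncomputable def depth (v : V) : ℕ := G.dist (G.connectedComponentMk v).out v

theorem exists_adj_depth_lt {v : V} (hv : v ≠ (G.connectedComponentMk v).out) :
    ∃ w, G.Adj w v ∧ G.depth w < G.depth v := by
  have hr : G.Reachable (G.connectedComponentMk v).out v :=
    ConnectedComponent.exact (ConnectedComponent.connectedComponentMk_out _ _)
  obtain ⟨w, hwv, hlt⟩ := hr.exists_adj_dist_lt (Ne.symm hv)
  refine ⟨w, hwv, ?_⟩
  rwa [depth, depth, ConnectedComponent.connectedComponentMk_eq_of_adj hwv]

open scoped Classical

variable [Fintype V]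

noncomputable def ConnectedComponent.size {G : SimpleGraph V} (K : G.ConnectedComponent) : ℕ :=
  #{v | G.connectedComponentMk v = K}

theorem ConnectedComponent.size_pos (K : G.ConnectedComponent) : 0 < K.size :=
  card_pos.2 ⟨K.out, by simpa using K.connectedComponentMk_out⟩

theorem mem_support_iff_two_le_size {v : V} :
    v ∈ G.support ↔ 2 ≤ (G.connectedComponentMk v).size := by
  change _ ↔ 1 < _
  rw [ConnectedComponent.size, one_lt_card]
  constructor
  · rintro ⟨w, hvw⟩
    exact ⟨v, by simp, w,
      by simpa using (ConnectedComponent.connectedComponentMk_eq_of_adj hvw).symm, hvw.ne⟩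
  · rintro ⟨a, ha, b, hb, hab⟩
    simp only [mem_filter, mem_univ, true_and] at ha hb
    obtain ⟨u, hu, huv⟩ : ∃ u, G.connectedComponentMk u = G.connectedComponentMk v ∧ u ≠ v := by
      by_cases hav : a = v
      exacts [⟨b, hb, fun h => hab (hav.trans h.symm)⟩, ⟨a, ha, hav⟩]
    obtain ⟨p⟩ := ConnectedComponent.exact hu.symm
    obtain ⟨w, hvw, -⟩ := p.exists_eq_cons_of_ne huv.symm
    exact ⟨w, hvw⟩

variable [DecidableEq V]

theorem sum_size : ∑ K : G.ConnectedComponent, K.size = Fintype.card V :=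
  (card_eq_sum_card_fiberwise fun v _ => mem_univ (G.connectedComponentMk v)).symm

theorem card_filter_connectedComponentMk (P : G.ConnectedComponent → Prop) [DecidablePred P] :
    #{v | P (G.connectedComponentMk v)} = ∑ K with P K, K.size := by
  rw [card_eq_sum_card_fiberwise (f := G.connectedComponentMk) (t := {K | P K})
    fun v hv => by simpa using hv]
  refine sum_congr rfl fun K hK => congr_arg card ?_
  ext v
  simp only [mem_filter, mem_univ, true_and, and_iff_right_iff_imp]
  rintro rfl
  simpa using hK

theorem ncard_support :
    G.support.ncard = ∑ K : G.ConnectedComponent with 2 ≤ K.size, K.size := by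
  rw [← G.card_filter_connectedComponentMk, ← Set.ncard_coe_finset]
  congr 1
  ext v
  simp [mem_support_iff_two_le_size]

theorem ncard_nontrivialComponents :
    (nontrivialComponents G).ncard = #{K : G.ConnectedComponent | 2 ≤ K.size} := by
  rw [← Set.ncard_coe_finset]
  congr 1
  ext K
  simp only [nontrivialComponents, mem_support_iff_two_le_size, coe_filter, mem_univ, true_and]
  constructor
  · rintro ⟨v, hv, rfl⟩
    exact hv
  · intro hK
    exact ⟨K.out, by rwa [K.connectedComponentMk_out], K.connectedComponentMk_out⟩

theorem card_connectedComponent_add_ncard_support :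
    Nat.card G.ConnectedComponent + G.support.ncard =
      Fintype.card V + (nontrivialComponents G).ncard := by
  have hsmall : ∑ K : G.ConnectedComponent with ¬ 2 ≤ K.size, K.size =
      #{K : G.ConnectedComponent | ¬ 2 ≤ K.size} :=
    (card_eq_sum_ones _).symm ▸ sum_congr rfl fun K hK => by
      have := K.size_pos
      simp only [mem_filter, mem_univ, true_and] at hK
      omega
  have hsum : ∑ K : G.ConnectedComponent with 2 ≤ K.size, K.size +
      ∑ K : G.ConnectedComponent with ¬ 2 ≤ K.size, K.size = Fintype.card V :=
    (sum_filter_add_sum_filter_not _ _ _).trans G.sum_size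
  have hcard : #{K : G.ConnectedComponent | 2 ≤ K.size} +
      #{K : G.ConnectedComponent | ¬ 2 ≤ K.size} = Fintype.card G.ConnectedComponent :=
    card_filter_add_card_filter_not _
  rw [ncard_support, ncard_nontrivialComponents, Nat.card_eq_fintype_card]
  omega

theorem prod_ite_eq_out (f : G.ConnectedComponent → ℕ) (d : ℕ) :
    ∏ v, (if v = (G.connectedComponentMk v).out then f (G.connectedComponentMk v) else d) =
      (∏ K, f K) * d ^ #{v | v ≠ (G.connectedComponentMk v).out} := by
  rw [prod_ite, prod_const]
  congr 1
  refine prod_nbij' G.connectedComponentMk (fun K => K.out) (by simp) (fun K _ => ?_)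
    (fun v hv => ?_) (fun K _ => K.connectedComponentMk_out) (fun _ _ => rfl)
  · simp [K.connectedComponentMk_out]
  · simpa using (mem_filter.1 hv).2.symm

theorem card_ne_out_le_ncard_edgeSet :
    #{v | v ≠ (G.connectedComponentMk v).out} ≤ G.edgeSet.ncard := by
  have hparent : ∀ v, ∃ p, v ≠ (G.connectedComponentMk v).out →
      G.Adj p v ∧ G.depth p < G.depth v := fun v => by
    by_cases hv : v = (G.connectedComponentMk v).out
    · exact ⟨v, fun h => absurd hv h⟩
    · obtain ⟨p, hp⟩ := G.exists_adj_depth_lt hv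
      exact ⟨p, fun _ => hp⟩
  choose p hp using hparent
  rw [← Set.ncard_coe_finset]
  refine Set.ncard_le_ncard_of_injOn (fun v => s(p v, v))
    (fun v hv => (hp v (by simpa using hv)).1) (fun u hu v hv huv => ?_) (Set.toFinite _)
  have hu' := (hp u (by simpa using hu)).2
  have hv' := (hp v (by simpa using hv)).2
  rcases Sym2.eq_iff.1 huv with ⟨-, h⟩ | ⟨h₁, h₂⟩
  · exact h
  · rw [h₁] at hu'
    rw [← h₂] at hv'
    omega

section Embeddings

noncomputable def permsMapInto (H F : SimpleGraph V) : Finset (Equiv.Perm V) :=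
  {τ | ∀ u v, H.Adj u v → F.Adj (τ u) (τ v)}

variable (F H : SimpleGraph V)

theorem ncard_copies_mul_card_aut_le :
    {F' : SimpleGraph V | Nonempty (F ≃g F') ∧ H ≤ F'}.ncard * Nat.card (F ≃g F) ≤
      #(H.permsMapInto F) := by
  rw [← Nat.card_coe_set_eq, ← Nat.card_prod, ← Nat.card_eq_finsetCard]
  refine Nat.card_le_card_of_injective (fun p =>
    ⟨((p.2.trans p.1.2.1.some).symm : p.1.1 ≃g F).toEquiv,
      mem_filter.2 ⟨mem_univ _, fun u v huv => ?_⟩⟩) ?_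
  · exact (Iso.map_adj_iff (p.2.trans p.1.2.1.some).symm).2 (p.1.2.2 huv)
  · rintro ⟨⟨F₁, h₁⟩, α₁⟩ ⟨⟨F₂, h₂⟩, α₂⟩ h
    have he : ∀ v, (α₁.trans h₁.1.some).symm v = (α₂.trans h₂.1.some).symm v :=
      fun v => congr_fun (congr_arg (⇑) (congr_arg Subtype.val h)) v
    obtain rfl : F₁ = F₂ := by
      ext u v
      rw [← Iso.map_adj_iff (α₁.trans h₁.1.some).symm,
        ← Iso.map_adj_iff (α₂.trans h₂.1.some).symm, he, he]
    have htrans : α₁.trans h₁.1.some = α₂.trans h₁.1.some := by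
      rw [← RelIso.symm_symm (α₁.trans _), RelIso.ext he, RelIso.symm_symm]
    rw [RelIso.ext fun v => h₁.1.some.injective (RelIso.ext_iff.1 htrans v)]

theorem card_permsMapInto_le {d : ℕ} (hdeg : ∀ v, (F.neighborSet v).ncard ≤ d) {κ : Type*}
    [LinearOrder κ] (key : H.ConnectedComponent → κ) :
    #(H.permsMapInto F) ≤ (∏ K, ∑ K' with key K ≤ key K', K'.size) *
      d ^ #{v | v ≠ (H.connectedComponentMk v).out} := by
  set S : Finset (V → V) := (H.permsMapInto F).image (⇑)
  rw [← card_image_of_injective _ Equiv.coe_fn_injective, ← prod_ite_eq_out]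
  refine card_le_prod_of_card_image_le (fun v => toLex (key (H.connectedComponentMk v), H.depth v))
    S _ fun v f hf => ?_
  obtain ⟨σ, -, rfl⟩ := mem_image.1 hf
  split_ifs with hv
  · set B : Finset V := {u | key (H.connectedComponentMk u) < key (H.connectedComponentMk v)}
    calc _ ≤ #(univ \ B.image σ) := card_le_card fun y hy => by
          simp only [mem_image, mem_filter, S] at hy
          obtain ⟨_, ⟨⟨τ, -, rfl⟩, hagree⟩, rfl⟩ := hy
          simp only [mem_sdiff, mem_univ, mem_image, true_and, not_exists, not_and]
          intro u hu hτ
          have huv : τ u = τ v :=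
            hτ ▸ hagree u (Prod.Lex.toLex_lt_toLex.2 (Or.inl (mem_filter.1 hu).2))
          exact (mem_filter.1 hu).2.ne (by rw [τ.injective huv])
      _ = ∑ K' with key (H.connectedComponentMk v) ≤ key K', K'.size := by
          rw [card_sdiff_of_subset (subset_univ _), card_image_of_injective _ σ.injective,
            card_univ, ← card_compl, ← H.card_filter_connectedComponentMk]
          congr 1
          ext u
          simp [B]
  · obtain ⟨p, hpv, hlt⟩ := H.exists_adj_depth_lt hv
    have hpkey : toLex (key (H.connectedComponentMk p), H.depth p) <
        toLex (key (H.connectedComponentMk v), H.depth v) := by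
      rw [ConnectedComponent.connectedComponentMk_eq_of_adj hpv]
      exact Prod.Lex.toLex_lt_toLex.2 (Or.inr ⟨rfl, hlt⟩)
    calc _ ≤ (F.neighborSet (σ p)).ncard := by
          rw [← Set.ncard_coe_finset]
          refine Set.ncard_le_ncard (fun y hy => ?_) (Set.toFinite _)
          simp only [coe_image, coe_filter, Set.mem_image, Set.mem_ofPred_eq, S, mem_image] at hy
          obtain ⟨_, ⟨⟨τ, hτ, rfl⟩, hagree⟩, rfl⟩ := hy
          rw [mem_neighborSet, ← hagree p hpkey]
          exact (mem_filter.1 hτ).2 p v hpv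
      _ ≤ d := hdeg _

theorem pow_card_ne_out_le {d : ℕ} (hdeg : ∀ v, (F.neighborSet v).ncard ≤ d) (hHF : H ≤ F) :
    d ^ #{v | v ≠ (H.connectedComponentMk v).out} ≤ d ^ H.edgeSet.ncard := by
  rcases Nat.eq_zero_or_pos d with rfl | hd
  · have hempty : H.edgeSet = ∅ := by
      refine Set.eq_empty_of_forall_notMem fun e he => ?_
      induction e using Sym2.ind with | _ u v => ?_
      exact ((Set.ncard_pos (Set.toFinite _)).2 ⟨v, hHF he⟩).ne' (Nat.le_zero.1 (hdeg u))
    have h0 := H.card_ne_out_le_ncard_edgeSet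
    rw [hempty, Set.ncard_empty, Nat.le_zero] at h0
    rw [h0, hempty, Set.ncard_empty]
  · exact Nat.pow_le_pow_right hd H.card_ne_out_le_ncard_edgeSet

end Embeddings

end SimpleGraph

/-- Given a `d`-regular graph `F` on `[n]` and a subgraph `H ⊆ F` with `ℓ` edges,
`x` non-isolated vertices, and `c` components (excluding isolated vertices), the number
of isomorphic copies `F'` of `F` on `[n]` with `H ⊆ F'` is at most
`(n - x + c)! ⬝ (x/c)^c ⬝ d^ℓ / |Aut(F)|`. -/
theorem count_extensions_to_copies {n d : ℕ} (F : SimpleGraph (Fin n))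
    (hreg : IsRegularGraph F d) (H : SimpleGraph (Fin n)) (hHF : H ≤ F)
    (ℓ x c : ℕ) (hl : H.edgeSet.ncard = ℓ) (hx : H.support.ncard = x)
    (hc : (nontrivialComponents H).ncard = c) :
    ({F' : SimpleGraph (Fin n) | Nonempty (F ≃g F') ∧ H ≤ F'}.ncard : ℝ)
      ≤ ((n - x + c).factorial : ℝ) * ((x : ℝ) / c) ^ c * (d : ℝ) ^ ℓ /
        (Nat.card (F ≃g F) : ℝ) := by
  classical
  have hdeg : ∀ v, (F.neighborSet v).ncard ≤ d := fun v => (hreg v).le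
  have : Finite (F ≃g F) := Finite.of_injective _ RelIso.toEquiv_injective
  rw [le_div_iff₀ (Nat.cast_pos.2 (Nat.card_pos (α := F ≃g F)))]
  obtain ⟨key, hkey, hanti⟩ := exists_injective_antitone_key (ConnectedComponent.size (G := H))
  have hcount := (ncard_copies_mul_card_aut_le F H).trans (card_permsMapInto_le F H hdeg key)
  have htail := prod_sum_tail_le hkey hanti fun K => K.size_pos
  have hcomp := H.card_connectedComponent_add_ncard_support
  have hxn : x ≤ n := by simpa [hx] using H.support.ncard_le_card
  rw [← ncard_support, ← ncard_nontrivialComponents, hx, hc] at htail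
  rw [Fintype.card_fin, hx, hc] at hcomp
  rw [show Nat.card H.ConnectedComponent = n - x + c by omega] at htail
  have hpow : ((d ^ #{v | v ≠ (H.connectedComponentMk v).out} : ℕ) : ℝ) ≤ (d : ℝ) ^ ℓ := by
    rw [← hl]
    exact_mod_cast pow_card_ne_out_le F H hdeg hHF
  calc _ ≤ (((∏ K, ∑ K' with key K ≤ key K', K'.size) *
        d ^ #{v | v ≠ (H.connectedComponentMk v).out} : ℕ) : ℝ) := by exact_mod_cast hcount
    _ ≤ ((x : ℝ) / c) ^ c * (n - x + c).factorial * d ^ ℓ := by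
      rw [Nat.cast_mul]
      gcongr
    _ = _ := by ring
end

section
/- Let τ > 0 and ε' ∈ (0,1). Then the sum over integers c from 0 to (1+ε')τ of (eτ/c)^c (with the c=0 term equal to 1) is at most 3√τ · e^τ, for τ sufficiently large. -/
open Nat

open Finset in
private lemma my_stirling (n : ℕ) (hn : 1 ≤ n) :
    (n ! : ℝ) ≤ Real.exp 1 * Real.sqrt n * ((n : ℝ) / Real.exp 1) ^ n := by
  have hn' : (0 : ℝ) < n := by exact_mod_cast hn
  have h1 : Stirling.stirlingSeq n ≤ Real.exp 1 / Real.sqrt 2 := by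
    obtain ⟨m, rfl⟩ := Nat.exists_eq_add_of_le hn
    have := Stirling.stirlingSeq'_antitone (Nat.zero_le m)
    rw [← Stirling.stirlingSeq_one]
    simpa [Nat.succ_eq_add_one, add_comm] using this
  have hD : (0 : ℝ) < Real.sqrt (2 * n) * ((n : ℝ) / Real.exp 1) ^ n := by positivity
  rw [Stirling.stirlingSeq] at h1
  have h2 := (div_le_iff₀ hD).mp h1
  refine h2.trans_eq ?_
  rw [show (2 : ℝ) * n = 2 * n from rfl, Real.sqrt_mul (by norm_num : (0:ℝ) ≤ 2)]
  have hs2 : Real.sqrt 2 ≠ 0 := by positivity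
  field_simp

/-- For `ε' ∈ (0,1)` and all sufficiently large `τ > 0`,
`∑_{c=0}^{(1+ε')τ} (eτ/c)^c ≤ 3√τ e^τ`, where the `c = 0` term equals `1`. -/
theorem sum_gaussian_tail_bound (ε' : ℝ) (hε1 : 0 < ε') (hε2 : ε' < 1) :
    ∃ T : ℝ, ∀ τ : ℝ, T ≤ τ → 0 < τ →
      ∑ c ∈ Finset.range (⌊(1 + ε') * τ⌋₊ + 1),
          (if c = 0 then (1 : ℝ) else (Real.exp 1 * τ / c) ^ c)
        ≤ 3 * Real.sqrt τ * Real.exp τ := by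
  refine ⟨100, fun τ hT hτ => ?_⟩
  set N := ⌊(1 + ε') * τ⌋₊ + 1 with hN
  -- Step 1: termwise bound via Stirling
  have hterm : ∀ c ∈ Finset.range N,
      (if c = 0 then (1 : ℝ) else (Real.exp 1 * τ / c) ^ c)
        ≤ (if c = 0 then (1 : ℝ) else 0) +
          Real.exp 1 * (Real.sqrt (c * (τ ^ c / c !)) * Real.sqrt (τ ^ c / c !)) := by
    intro c _
    rcases Nat.eq_zero_or_pos c with rfl | hc
    · simp
    · have hc0 : (0 : ℝ) < c := by exact_mod_cast hc
      have hfac : (0 : ℝ) < c ! := by exact_mod_cast Nat.factorial_pos c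
      have hcne : c ≠ 0 := Nat.pos_iff_ne_zero.mp hc
      simp only [hcne, if_false]
      have hsqrt : Real.sqrt ((c : ℝ) * (τ ^ c / c !)) * Real.sqrt (τ ^ c / c !)
          = Real.sqrt c * (τ ^ c / c !) := by
        rw [Real.sqrt_mul (le_of_lt hc0), mul_assoc,
          Real.mul_self_sqrt (by positivity)]
      rw [hsqrt]
      -- goal: (e τ / c)^c ≤ 0 + e * (√c * (τ^c / c!))
      have hst := my_stirling c hc
      have key : (Real.exp 1 * τ / c) ^ c * (c !) ≤
          Real.exp 1 * Real.sqrt c * τ ^ c := by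
        calc (Real.exp 1 * τ / c) ^ c * (c !)
            ≤ (Real.exp 1 * τ / c) ^ c *
              (Real.exp 1 * Real.sqrt c * ((c : ℝ) / Real.exp 1) ^ c) := by
              apply mul_le_mul_of_nonneg_left hst (by positivity)
          _ = Real.exp 1 * Real.sqrt c *
              ((Real.exp 1 * τ / c) * ((c : ℝ) / Real.exp 1)) ^ c := by
              rw [mul_pow]; ring
          _ = Real.exp 1 * Real.sqrt c * τ ^ c := by
              congr 2
              field_simp
          _ = Real.exp 1 * Real.sqrt c * τ ^ c := rfl
      have := (le_div_iff₀ hfac).mpr key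
      calc (Real.exp 1 * τ / c) ^ c = (Real.exp 1 * τ / c) ^ c * (c !) / (c !) := by
            field_simp
        _ ≤ Real.exp 1 * Real.sqrt c * τ ^ c / (c !) := by
            gcongr
        _ = 0 + Real.exp 1 * (Real.sqrt c * (τ ^ c / c !)) := by ring
  have hsum1 := Finset.sum_le_sum hterm
  -- Step 2: sum of the indicator part is 1
  have hind : ∑ c ∈ Finset.range N, (if c = 0 then (1 : ℝ) else 0) = 1 := by
    rw [Finset.sum_ite_eq' (Finset.range N) 0 (fun _ => (1 : ℝ))]
    simp [hN]
  -- Step 3: Cauchy–Schwarz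
  have hCS : ∑ c ∈ Finset.range N,
      Real.sqrt ((c : ℝ) * (τ ^ c / c !)) * Real.sqrt (τ ^ c / c !)
      ≤ Real.sqrt (∑ c ∈ Finset.range N, (c : ℝ) * (τ ^ c / c !)) *
        Real.sqrt (∑ c ∈ Finset.range N, τ ^ c / c !) := by
    apply Real.sum_sqrt_mul_sqrt_le
    · intro i; positivity
    · intro i; positivity
  -- Step 4: bound the two sums
  have hexp : ∑ c ∈ Finset.range N, τ ^ c / c ! ≤ Real.exp τ :=
    Real.sum_le_exp_of_nonneg hτ.le N
  have hmean : ∑ c ∈ Finset.range N, (c : ℝ) * (τ ^ c / c !) ≤ τ * Real.exp τ := by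
    rw [hN, Finset.sum_range_succ']
    simp only [Nat.cast_zero, zero_mul, add_zero]
    have heq : ∀ i : ℕ, ((i + 1 : ℕ) : ℝ) * (τ ^ (i + 1) / (i + 1)!)
        = τ * (τ ^ i / i !) := by
      intro i
      rw [Nat.factorial_succ]
      push_cast
      have h1 : ((i : ℝ) + 1) ≠ 0 := by positivity
      have h2 : (i ! : ℝ) ≠ 0 := by exact_mod_cast (Nat.factorial_pos i).ne'
      field_simp
      ring
    rw [Finset.sum_congr rfl (fun i _ => heq i), ← Finset.mul_sum]
    exact mul_le_mul_of_nonneg_left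
      (Real.sum_le_exp_of_nonneg hτ.le _) hτ.le
  -- combine
  have hτ1 : (1 : ℝ) ≤ τ := by linarith
  have hsqrtτ : (1 : ℝ) ≤ Real.sqrt τ := by
    rw [show (1:ℝ) = Real.sqrt 1 by simp]
    exact Real.sqrt_le_sqrt hτ1
  have hprod : Real.sqrt (∑ c ∈ Finset.range N, (c : ℝ) * (τ ^ c / c !)) *
      Real.sqrt (∑ c ∈ Finset.range N, τ ^ c / c !)
      ≤ Real.sqrt τ * Real.exp τ := by
    have h1 : Real.sqrt (∑ c ∈ Finset.range N, (c : ℝ) * (τ ^ c / c !))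
        ≤ Real.sqrt (τ * Real.exp τ) := Real.sqrt_le_sqrt hmean
    have h2 : Real.sqrt (∑ c ∈ Finset.range N, τ ^ c / c !)
        ≤ Real.sqrt (Real.exp τ) := Real.sqrt_le_sqrt hexp
    calc Real.sqrt (∑ c ∈ Finset.range N, (c : ℝ) * (τ ^ c / c !)) *
        Real.sqrt (∑ c ∈ Finset.range N, τ ^ c / c !)
        ≤ Real.sqrt (τ * Real.exp τ) * Real.sqrt (Real.exp τ) := by
          apply mul_le_mul h1 h2 (Real.sqrt_nonneg _) (Real.sqrt_nonneg _)
      _ = Real.sqrt τ * Real.exp τ := by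
          rw [Real.sqrt_mul hτ.le, mul_assoc, Real.mul_self_sqrt (Real.exp_nonneg τ)]
  have hfinal : ∑ c ∈ Finset.range N,
      (if c = 0 then (1 : ℝ) else (Real.exp 1 * τ / c) ^ c)
      ≤ 1 + Real.exp 1 * (Real.sqrt τ * Real.exp τ) := by
    calc ∑ c ∈ Finset.range N, (if c = 0 then (1 : ℝ) else (Real.exp 1 * τ / c) ^ c)
        ≤ ∑ c ∈ Finset.range N, ((if c = 0 then (1 : ℝ) else 0) +
          Real.exp 1 * (Real.sqrt (c * (τ ^ c / c !)) * Real.sqrt (τ ^ c / c !))) := hsum1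
      _ = 1 + Real.exp 1 * ∑ c ∈ Finset.range N,
          Real.sqrt ((c : ℝ) * (τ ^ c / c !)) * Real.sqrt (τ ^ c / c !) := by
          rw [Finset.sum_add_distrib, hind, Finset.mul_sum]
      _ ≤ 1 + Real.exp 1 * (Real.sqrt τ * Real.exp τ) := by
          have := hCS.trans hprod
          have he : (0:ℝ) < Real.exp 1 := Real.exp_pos 1
          nlinarith [Real.exp_pos (1:ℝ)]
  refine hfinal.trans ?_
  -- 1 + e * (√τ e^τ) ≤ 3 √τ e^τ
  have he : Real.exp 1 ≤ 2.7182818286 := Real.exp_one_lt_d9.le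
  have hexpτ : (1 : ℝ) ≤ Real.exp τ := Real.one_le_exp hτ.le
  have h10 : (10 : ℝ) ≤ Real.sqrt τ := by
    rw [show (10 : ℝ) = Real.sqrt 100 by
      rw [show (100 : ℝ) = 10 ^ 2 by norm_num, Real.sqrt_sq (by norm_num)]]
    exact Real.sqrt_le_sqrt hT
  have hs : (10 : ℝ) ≤ Real.sqrt τ * Real.exp τ := by nlinarith
  nlinarith [hs, he]
end

section
/- Let F be a d-regular locally sparse graph on [n] and let F̃ be a connected subgraph of F with x vertices, ℓ edges, and excess σ = (d/2)x − ℓ − Δ/2 ≥ 0. Then the vertex boundary of F̃ (vertices of degree less than d in F̃) has size at most Δ + 2σ. -/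
open SimpleGraph

/-! Each vertex of `H` of degree below `d` contributes at least one to the degree deficiency
`∑ v ∈ H, (d - deg_H v)`, which by the handshake lemma is `d·|H| - 2|E(H)| = Δ + 2σ`. -/

open Finset

theorem Finset.card_filter_lt_le_sum_tsub {α : Type*} (s : Finset α) (f : α → ℕ) (d : ℕ) :
    #{a ∈ s | f a < d} ≤ ∑ a ∈ s, (d - f a) := by
  rw [Finset.card_filter]
  gcongr with a
  split_ifs <;> omega

namespace SimpleGraph.Subgraph

variable {V : Type*} {G : SimpleGraph V}

theorem ncard_neighborSet_eq_zero_of_notMem {H : G.Subgraph} {v : V} (hv : v ∉ H.verts) :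
    (H.neighborSet v).ncard = 0 := by
  have hempty : H.neighborSet v = ∅ :=
    Set.eq_empty_of_forall_notMem fun _ hw => hv (H.edge_vert hw)
  rw [hempty, Set.ncard_empty]

theorem sum_ncard_neighborSet_eq_two_mul_ncard_edgeSet [Fintype V] (H : G.Subgraph) :
    ∑ v, (H.neighborSet v).ncard = 2 * H.edgeSet.ncard := by
  classical
  rw [← edgeSet_spanningCoe, ← coe_edgeFinset, Set.ncard_coe_finset,
    ← sum_degrees_eq_twice_card_edges]
  refine Finset.sum_congr rfl fun v _ => ?_
  rw [← card_neighborFinset_eq_degree, neighborFinset_def]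
  exact Set.ncard_eq_toFinset_card' (H.spanningCoe.neighborSet v)

theorem ncard_filter_lt_add_two_mul_ncard_edgeSet_le [Fintype V] (H : G.Subgraph) {d : ℕ}
    (hdeg : ∀ v ∈ H.verts, (H.neighborSet v).ncard ≤ d) :
    {v ∈ H.verts | (H.neighborSet v).ncard < d}.ncard + 2 * H.edgeSet.ncard
      ≤ d * H.verts.ncard := by
  classical
  have hfilter : {v ∈ H.verts | (H.neighborSet v).ncard < d}.ncard
      = #{v ∈ H.verts.toFinset | (H.neighborSet v).ncard < d} := by
    rw [← Set.ncard_coe_finset]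
    congr 1
    ext v
    simp
  calc {v ∈ H.verts | (H.neighborSet v).ncard < d}.ncard + 2 * H.edgeSet.ncard
      ≤ ∑ v ∈ H.verts.toFinset, (d - (H.neighborSet v).ncard)
          + ∑ v ∈ H.verts.toFinset, (H.neighborSet v).ncard := by
        rw [hfilter, ← sum_ncard_neighborSet_eq_two_mul_ncard_edgeSet,
          Finset.sum_subset (Finset.subset_univ H.verts.toFinset) fun v _ hv =>
            ncard_neighborSet_eq_zero_of_notMem (by simpa using hv)]
        gcongr
        exact Finset.card_filter_lt_le_sum_tsub _ _ _
    _ = d * H.verts.ncard := by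
        rw [← Finset.sum_add_distrib, Finset.sum_congr rfl fun v hv =>
          Nat.sub_add_cancel (hdeg v (Set.mem_toFinset.mp hv)), Finset.sum_const, smul_eq_mul,
          mul_comm, Set.ncard_eq_toFinset_card']

end SimpleGraph.Subgraph

theorem vertex_boundary_le_excess_general {n d : ℕ} (G : SimpleGraph (Fin n))
    (hreg : IsRegularGraph G d)
    (H : G.Subgraph) (x ℓ σ : ℕ)
    (hx : H.verts.ncard = x) (hl : H.edgeSet.ncard = ℓ)
    (hσ : d * x = 2 * ℓ + Delta d + 2 * σ) :
    {v ∈ H.verts | (H.neighborSet v).ncard < d}.ncard ≤ Delta d + 2 * σ := by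
  have hcount := H.ncard_filter_lt_add_two_mul_ncard_edgeSet_le fun v _ =>
    hreg v ▸ Set.ncard_le_ncard (H.neighborSet_subset v)
  subst hx hl
  omega

/-- For a connected subgraph `H` of a locally sparse `d`-regular graph with `x` vertices,
`ℓ` edges and excess `σ` (i.e. `dx = 2ℓ + Δ + 2σ`), the vertex boundary of `H` (vertices
of degree less than `d` in `H`) has size at most `Δ + 2σ`. -/
theorem vertex_boundary_le_excess {n d : ℕ} (hd : 3 ≤ d) (G : SimpleGraph (Fin n))
    (hreg : IsRegularGraph G d) (hls : LocallySparse G d)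
    (H : G.Subgraph) (hconn : H.Connected) (x ℓ σ : ℕ)
    (hx : H.verts.ncard = x) (hl : H.edgeSet.ncard = ℓ)
    (hσ : d * x = 2 * ℓ + Delta d + 2 * σ) :
    {v ∈ H.verts | (H.neighborSet v).ncard < d}.ncard ≤ Delta d + 2 * σ :=
  vertex_boundary_le_excess_general G hreg H x ℓ σ hx hl hσ
end

section
/- Let ℱ be a finite family of graphs on [n], each with exactly f edges, let m ≤ N = C(n,2), and let t ∈ {0,…,f}. Let M(t) = |ℱ| · C(N−f, m−t) / C(N, m+f−t). Sample F uniformly from ℱ and W uniformly from the m-subsets of the edge set of K_n, independently. For δ > 0, the probability, conditioned on |F ∩ W| = t, that the number of F' ∈ ℱ with F' ⊆ F ∪ W is less than δ·M(t), is at most δ. -/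
open scoped Classical

/-! A bad pair `(F, W)` with `|F ∩ W| = t` is determined by `A = F ∪ W`, one of the
`C(N, m + f - t)` sets of `m + f - t` edges, by `F ∈ ℱ` with `F ⊆ A` (fewer than `δ M(t)` choices,
since the pair is bad) and by `F ∩ W`, a `t`-subset of `F`. So there are at most
`C(N, m + f - t) · δ M(t) · C(f, t) = δ |ℱ| C(f, t) C(N - f, m - t)` bad pairs, which is `δ` times
the exact number of pairs with `|F ∩ W| = t`. -/

open Finset

namespace Fragmentation

variable {α : Type*} [DecidableEq α]

theorem union_mem_powersetCard {E F W : Finset α} {f m t : ℕ} (hF : F ∈ E.powersetCard f)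
    (hW : W ∈ E.powersetCard m) (ht : #(F ∩ W) = t) :
    F ∪ W ∈ E.powersetCard (m + f - t) := by
  rw [mem_powersetCard] at hF hW ⊢
  refine ⟨union_subset hF.1 hW.1, ?_⟩
  have := card_union_add_card_inter F W
  omega

theorem card_filter_card_inter_eq {E F : Finset α} (hFE : F ⊆ E) {m t : ℕ} (htm : t ≤ m) :
    #{W ∈ E.powersetCard m | #(F ∩ W) = t} = (#F).choose t * (#E - #F).choose (m - t) := by
  rw [← card_sdiff_of_subset hFE, ← card_powersetCard, ← card_powersetCard, ← card_product]
  have hsplit : ∀ p ∈ F.powersetCard t ×ˢ (E \ F).powersetCard (m - t),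
      F ∩ (p.1 ∪ p.2) = p.1 ∧ (p.1 ∪ p.2) \ F = p.2 := by
    rintro ⟨S, T⟩ hST
    rw [mem_product, mem_powersetCard, mem_powersetCard] at hST
    have hFT : Disjoint F T := disjoint_of_subset_right hST.2.1 disjoint_sdiff
    constructor
    · rw [inter_union_distrib_left, inter_eq_right.mpr hST.1.1,
        disjoint_iff_inter_eq_empty.mp hFT, union_empty]
    · rw [union_sdiff_distrib, sdiff_eq_empty_iff_subset.mpr hST.1.1, empty_union,
        Finset.sdiff_eq_self_iff_disjoint.mpr hFT.symm]
  refine card_nbij' (fun W => (F ∩ W, W \ F)) (fun p => p.1 ∪ p.2) ?_ ?_ ?_ ?_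
  · intro W hW
    simp only [coe_filter, mem_powersetCard, Set.mem_ofPred_eq] at hW
    simp only [coe_product, Set.mem_prod, mem_coe, mem_powersetCard]
    refine ⟨⟨inter_subset_left, hW.2⟩, sdiff_subset_sdiff hW.1.1 le_rfl, ?_⟩
    rw [card_sdiff, hW.1.2, hW.2]
  · rintro ⟨S, T⟩ hST
    obtain ⟨hinter, -⟩ := hsplit _ hST
    simp only [coe_product, Set.mem_prod, mem_coe, mem_powersetCard] at hST hinter
    obtain ⟨⟨hSF, hS⟩, hTEF, hT⟩ := hST
    have hdisj : Disjoint S T :=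
      disjoint_of_subset_left hSF (disjoint_of_subset_right hTEF disjoint_sdiff)
    simp only [coe_filter, mem_powersetCard, Set.mem_ofPred_eq, hinter]
    refine ⟨⟨union_subset (hSF.trans hFE) (hTEF.trans sdiff_subset), ?_⟩, hS⟩
    rw [card_union_of_disjoint hdisj, hS, hT]
    omega
  · intro W _
    simp only [inter_comm F W, union_comm (W ∩ F), sdiff_union_inter]
  · intro p hp
    exact Prod.ext (hsplit p hp).1 (hsplit p hp).2

theorem card_pairs_inter_eq {E : Finset α} {ℱ : Finset (Finset α)} {f m t : ℕ}
    (hℱ : ℱ ⊆ E.powersetCard f) (htm : t ≤ m) :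
    #{p ∈ ℱ ×ˢ E.powersetCard m | #(p.1 ∩ p.2) = t} =
      #ℱ * (f.choose t * (#E - f).choose (m - t)) := by
  rw [card_filter, sum_product, card_eq_sum_ones, sum_mul, one_mul]
  refine sum_congr rfl fun F hF => ?_
  obtain ⟨hFE, rfl⟩ := mem_powersetCard.mp (hℱ hF)
  rw [← card_filter_card_inter_eq hFE htm, card_filter]

theorem card_pairs_union_eq_le {ℱ 𝒲 : Finset (Finset α)} {f : ℕ} (hℱ : ∀ F ∈ ℱ, #F = f)
    (A : Finset α) (t : ℕ) :
    #{p ∈ ℱ ×ˢ 𝒲 | p.1 ∪ p.2 = A ∧ #(p.1 ∩ p.2) = t} ≤ f.choose t * #{F ∈ ℱ | F ⊆ A} := by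
  refine card_le_mul_card_image_of_maps_to (f := Prod.fst) ?_ _ fun F hF => ?_
  · intro p hp
    simp only [mem_filter, mem_product] at hp ⊢
    exact ⟨hp.1.1, hp.2.1 ▸ subset_union_left⟩
  · rw [← (hℱ F (mem_filter.mp hF).1), ← card_powersetCard]
    refine card_le_card_of_injOn (fun p => p.1 ∩ p.2) ?_ ?_
    · intro p hp
      simp only [coe_filter, mem_filter, Set.mem_ofPred_eq] at hp
      simp only [mem_coe, mem_powersetCard, ← hp.2]
      exact ⟨inter_subset_left, hp.1.2.2⟩
    · intro p hp q hq hpq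
      simp only [coe_filter, mem_filter, Set.mem_ofPred_eq] at hp hq
      obtain ⟨p₁, p₂⟩ := p
      obtain ⟨q₁, q₂⟩ := q
      obtain rfl : p₁ = q₁ := hp.2.trans hq.2.symm
      refine Prod.ext rfl (eq_of_inf_eq_sup_eq (a := p₁) ?_ ?_)
      · simpa only [inf_eq_inter, inter_comm _ p₁] using hpq
      · simpa only [sup_eq_union, union_comm _ p₁] using hp.1.2.1.trans hq.1.2.1.symm

theorem card_bad_pairs_le_choose_mul {E : Finset α} {ℱ : Finset (Finset α)} {f m t : ℕ}
    (hℱ : ℱ ⊆ E.powersetCard f) {c : ℝ} (hc : 0 ≤ c) :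
    (#{p ∈ ℱ ×ˢ E.powersetCard m |
        #(p.1 ∩ p.2) = t ∧ (#{F' ∈ ℱ | F' ⊆ p.1 ∪ p.2} : ℝ) < c} : ℝ) ≤
      (#E).choose (m + f - t) * f.choose t * c := by
  set B := {p ∈ ℱ ×ˢ E.powersetCard m |
    #(p.1 ∩ p.2) = t ∧ (#{F' ∈ ℱ | F' ⊆ p.1 ∪ p.2} : ℝ) < c}
  have hB : ∀ p ∈ B, p.1 ∪ p.2 ∈ E.powersetCard (m + f - t) := by
    intro p hp
    simp only [B, mem_filter, mem_product] at hp
    exact union_mem_powersetCard (hℱ hp.1.1) hp.1.2 hp.2.1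
  have hfiber : ∀ A ∈ E.powersetCard (m + f - t),
      (#{p ∈ B | p.1 ∪ p.2 = A} : ℝ) ≤ f.choose t * c := by
    intro A _
    obtain h | ⟨p, hp⟩ := {p ∈ B | p.1 ∪ p.2 = A}.eq_empty_or_nonempty
    · rw [h, card_empty, Nat.cast_zero]
      positivity
    have hA : (#{F' ∈ ℱ | F' ⊆ A} : ℝ) < c := by
      simp only [B, mem_filter] at hp
      exact hp.2 ▸ hp.1.2.2
    have hsub : {p ∈ B | p.1 ∪ p.2 = A} ⊆
        {p ∈ ℱ ×ˢ E.powersetCard m | p.1 ∪ p.2 = A ∧ #(p.1 ∩ p.2) = t} := by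
      intro p hp
      simp only [B, mem_filter] at hp ⊢
      exact ⟨hp.1.1, hp.2, hp.1.2.1⟩
    calc (#{p ∈ B | p.1 ∪ p.2 = A} : ℝ)
        ≤ f.choose t * #{F ∈ ℱ | F ⊆ A} := by
          exact_mod_cast (card_le_card hsub).trans
            (card_pairs_union_eq_le (fun F hF => (mem_powersetCard.mp (hℱ hF)).2) A t)
      _ ≤ f.choose t * c := by gcongr
  calc (#B : ℝ) = ∑ A ∈ E.powersetCard (m + f - t), (#{p ∈ B | p.1 ∪ p.2 = A} : ℝ) := by
        exact_mod_cast card_eq_sum_card_fiberwise hB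
    _ ≤ #(E.powersetCard (m + f - t)) * (f.choose t * c) := by
        simpa using sum_le_card_nsmul _ _ _ hfiber
    _ = (#E).choose (m + f - t) * f.choose t * c := by
        rw [card_powersetCard, mul_assoc]

theorem card_bad_pairs_le_mul_card_pairs {E : Finset α} {ℱ : Finset (Finset α)} {f m t : ℕ}
    (hℱ : ℱ ⊆ E.powersetCard f) {δ : ℝ} (hδ : 0 ≤ δ) :
    (#{p ∈ ℱ ×ˢ E.powersetCard m | #(p.1 ∩ p.2) = t ∧ (#{F' ∈ ℱ | F' ⊆ p.1 ∪ p.2} : ℝ) <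
        δ * ((#ℱ : ℝ) * ((#E - f).choose (m - t) : ℝ) / ((#E).choose (m + f - t) : ℝ))} : ℝ) ≤
      δ * (#{p ∈ ℱ ×ˢ E.powersetCard m | #(p.1 ∩ p.2) = t} : ℝ) := by
  obtain htm | hmt := le_or_gt t m
  · rw [card_pairs_inter_eq hℱ htm]
    refine (card_bad_pairs_le_choose_mul hℱ (by positivity)).trans ?_
    obtain h | h := eq_or_ne ((#E).choose (m + f - t) : ℝ) 0
    · rw [h, zero_mul, zero_mul]
      positivity
    · field_simp
      push_cast
      exact le_of_eq (by ring)
  · rw [filter_eq_empty_iff.mpr, card_empty, Nat.cast_zero]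
    · positivity
    rintro ⟨F, W⟩ hFW ⟨hFWt, -⟩
    have := card_le_card (inter_subset_right (s₁ := F) (s₂ := W))
    rw [mem_product, mem_powersetCard] at hFW
    dsimp only at hFW hFWt
    omega

theorem card_filter_not_isDiag {β : Type*} [Fintype β] [DecidableEq β] :
    #{e : Sym2 β | ¬e.IsDiag} = (Fintype.card β).choose 2 := by
  rw [← Fintype.card_subtype, Sym2.card_subtype_not_diag]

theorem filter_card_eq_and_forall_eq_powersetCard {β : Type*} [Fintype β] (p : β → Prop)
    [DecidablePred p] (m : ℕ) [DecidablePred fun s : Finset β => #s = m ∧ ∀ b ∈ s, p b] :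
    univ.filter (fun s : Finset β => #s = m ∧ ∀ b ∈ s, p b) = powersetCard m (univ.filter p) := by
  ext s
  simp only [mem_filter, mem_univ, true_and, mem_powersetCard, subset_iff]
  tauto

end Fragmentation

open Fragmentation in
theorem fragmentation_counting_general (n m f t : ℕ) (ℱ : Finset (Finset (Sym2 (Fin n))))
    (hℱ : ∀ F ∈ ℱ, F.card = f ∧ ∀ e ∈ F, ¬ e.IsDiag)
    (δ : ℝ) (hδ : 0 < δ) :
    let 𝒲 : Finset (Finset (Sym2 (Fin n))) :=
      Finset.univ.filter (fun W => W.card = m ∧ ∀ e ∈ W, ¬ e.IsDiag);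
    let M : ℝ := (ℱ.card : ℝ) * ((n.choose 2 - f).choose (m - t) : ℝ) /
      ((n.choose 2).choose (m + f - t) : ℝ);
    (((ℱ ×ˢ 𝒲).filter (fun FW => (FW.1 ∩ FW.2).card = t ∧
        ((ℱ.filter (fun F' => F' ⊆ FW.1 ∪ FW.2)).card : ℝ) < δ * M)).card : ℝ)
      ≤ δ * (((ℱ ×ˢ 𝒲).filter (fun FW => (FW.1 ∩ FW.2).card = t)).card : ℝ) := by
  intro 𝒲 M
  have hℱE : ℱ ⊆ (univ.filter fun e : Sym2 (Fin n) => ¬e.IsDiag).powersetCard f := fun F hF =>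
    mem_powersetCard.mpr ⟨fun e he => mem_filter.mpr ⟨mem_univ e, (hℱ F hF).2 e he⟩, (hℱ F hF).1⟩
  have := card_bad_pairs_le_mul_card_pairs hℱE hδ.le (m := m) (t := t)
  rwa [card_filter_not_isDiag, Fintype.card_fin,
    ← filter_card_eq_and_forall_eq_powersetCard] at this

/-- Fragmentation counting lemma: let `ℱ` be a family of graphs on `[n]` (identified
with their edge sets inside `K_n`), each with exactly `f` edges, let
`M(t) = |ℱ| C(N - f, m - t) / C(N, m + f - t)` with `N = C(n,2)`, and sample `(F, W)`
uniformly with `W` an `m`-subset of the edges of `K_n`. Conditionally on `|F ∩ W| = t`,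
the probability that fewer than `δ M(t)` members `F' ∈ ℱ` satisfy `F' ⊆ F ∪ W` is at
most `δ`; equivalently, counting pairs, the number of bad pairs with `|F ∩ W| = t` is at
most `δ` times the number of pairs with `|F ∩ W| = t`. -/
theorem fragmentation_counting (n m f t : ℕ) (ht : t ≤ f)
    (ℱ : Finset (Finset (Sym2 (Fin n))))
    (hℱ : ∀ F ∈ ℱ, F.card = f ∧ ∀ e ∈ F, ¬ e.IsDiag)
    (δ : ℝ) (hδ : 0 < δ) :
    let 𝒲 : Finset (Finset (Sym2 (Fin n))) :=
      Finset.univ.filter (fun W => W.card = m ∧ ∀ e ∈ W, ¬ e.IsDiag);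
    let M : ℝ := (ℱ.card : ℝ) * ((n.choose 2 - f).choose (m - t) : ℝ) /
      ((n.choose 2).choose (m + f - t) : ℝ);
    (((ℱ ×ˢ 𝒲).filter (fun FW => (FW.1 ∩ FW.2).card = t ∧
        ((ℱ.filter (fun F' => F' ⊆ FW.1 ∪ FW.2)).card : ℝ) < δ * M)).card : ℝ)
      ≤ δ * (((ℱ ×ˢ 𝒲).filter (fun FW => (FW.1 ∩ FW.2).card = t)).card : ℝ) :=
  fragmentation_counting_general n m f t ℱ hℱ δ hδ
end

section
/- Fix ε > 0 and let n! denote the number of rooted oriented squares of Hamilton cycles on [n]. Let m = ⌊(1+ε)√(e/n)·C(n,2)⌋ and f = 2n (edges of the square of an n-cycle). Then M := n! · C(N−f, m−t)/C(N, m+f−t) satisfies M = (1+ε)^{(2−o(1))n} for every fixed t ∈ {0,…,f}, where N = C(n,2); in particular M → ∞ superexponentially in n. -/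
/-!
Put `p = (1 + ε)√(e/n)`, `f = 2n` and `a = ⌊pN⌋ - t`. Then
`C(N-f, a) / C(N, a+f) = (a+f)_f / (N)_f` lies between `((a+1)/N)^f` and `((a+f)/(N+1-f))^f`,
and both bases are `p (1 + o(1))` because `a = pN + O(n)` while `pN ≍ n^{3/2}`. Hence
`log M = log n! + 2n log p + o(n) = (n log n - n) + (2n log(1+ε) + n - n log n) + o(n)`
by Stirling, that is `log M = 2n log(1+ε) + o(n)`.
-/

open Filter Real Topology
open scoped Nat

/-- The probability that a fixed `f`-subset of an `N`-set lies in a uniformly random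
`(a + f)`-subset. -/
noncomputable def containmentProb (N f a : ℕ) : ℝ := ((N - f).choose a : ℝ) / N.choose (a + f)

theorem containmentProb_pos {N f a : ℕ} (h : a + f ≤ N) : 0 < containmentProb N f a :=
  div_pos (mod_cast Nat.choose_pos (by omega)) (mod_cast Nat.choose_pos h)

theorem containmentProb_eq_descFactorial_div {N f a : ℕ} (h : a + f ≤ N) :
    containmentProb N f a = ((a + f).descFactorial f : ℝ) / N.descFactorial f := by
  have hchoose_mul := Nat.choose_mul (n := N) (k := a + f) (Nat.le_add_left f a)
  rw [Nat.add_sub_cancel] at hchoose_mul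
  have hchoose : (N.choose (a + f) : ℝ) ≠ 0 := mod_cast (Nat.choose_pos h).ne'
  have hdesc : (N.descFactorial f : ℝ) ≠ 0 := mod_cast (Nat.descFactorial_pos.2 (by omega)).ne'
  rw [containmentProb, div_eq_div_iff hchoose hdesc, Nat.descFactorial_eq_factorial_mul_choose,
    Nat.descFactorial_eq_factorial_mul_choose]
  have hchoose_mul_cast := congrArg (Nat.cast : ℕ → ℝ) hchoose_mul
  push_cast at hchoose_mul_cast ⊢
  linear_combination (f ! : ℝ) * hchoose_mul_cast.symm

theorem pow_le_containmentProb {N f a : ℕ} (h : a + f ≤ N) :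
    (((a : ℝ) + 1) / N) ^ f ≤ containmentProb N f a := by
  have hlow : (a + 1) ^ f ≤ (a + f).descFactorial f := by
    simpa [show a + f + 1 - f = a + 1 by omega] using Nat.pow_sub_le_descFactorial (a + f) f
  rw [containmentProb_eq_descFactorial_div h, div_pow]
  exact div_le_div₀ (by positivity) (mod_cast hlow)
    (mod_cast Nat.descFactorial_pos.2 (by omega)) (mod_cast Nat.descFactorial_le_pow N f)

theorem containmentProb_le_pow {N f a : ℕ} (h : a + f ≤ N) :
    containmentProb N f a ≤ (((a : ℝ) + f) / (N + 1 - f)) ^ f := by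
  have hcast : (((N + 1 - f : ℕ)) : ℝ) = N + 1 - f := by push_cast [show f ≤ N + 1 by omega]; ring
  have hpos : (0 : ℝ) < N + 1 - f := by rw [← hcast]; exact_mod_cast (by omega : 0 < N + 1 - f)
  rw [containmentProb_eq_descFactorial_div h, div_pow]
  refine div_le_div₀ (by positivity) (mod_cast Nat.descFactorial_le_pow (a + f) f)
    (by positivity) ?_
  rw [← hcast]
  exact_mod_cast Nat.pow_sub_le_descFactorial N f

theorem tendsto_div_of_abs_sub_le {α : Type*} {l : Filter α} {x y b : α → ℝ}
    (hx : ∀ᶠ i in l, x i ≠ 0) (hyx : ∀ᶠ i in l, |y i - x i| ≤ b i)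
    (hb : Tendsto (fun i => b i / x i) l (𝓝 0)) : Tendsto (fun i => y i / x i) l (𝓝 1) := by
  rw [tendsto_iff_norm_sub_tendsto_zero]
  refine squeeze_zero' (.of_forall fun _ => norm_nonneg _) ?_ (by simpa using hb.abs)
  filter_upwards [hx, hyx] with i hxi hyxi
  rw [Real.norm_eq_abs, div_sub_one hxi, abs_div, abs_div,
    abs_of_nonneg ((abs_nonneg _).trans hyxi)]
  exact div_le_div_of_nonneg_right hyxi (abs_nonneg _)

theorem tendsto_log_div_sub_log_of_pow_le_of_le_pow {α : Type*} {l : Filter α}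
    {ρ L U p : α → ℝ} {k : α → ℕ} (hL : ∀ᶠ i in l, 0 < L i) (hp : ∀ᶠ i in l, 0 < p i)
    (hk : ∀ᶠ i in l, 0 < k i) (hlow : ∀ᶠ i in l, L i ^ k i ≤ ρ i)
    (hup : ∀ᶠ i in l, ρ i ≤ U i ^ k i) (hLp : Tendsto (fun i => L i / p i) l (𝓝 1))
    (hUp : Tendsto (fun i => U i / p i) l (𝓝 1)) :
    Tendsto (fun i => log (ρ i) / k i - log (p i)) l (𝓝 0) := by
  have hlog : ∀ {g : α → ℝ}, Tendsto g l (𝓝 1) → Tendsto (fun i => log (g i)) l (𝓝 0) :=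
    fun hg => by simpa [Function.comp_def] using ((continuousAt_log one_ne_zero).tendsto).comp hg
  have hU : ∀ᶠ i in l, 0 < U i :=
    (hUp.eventually (eventually_gt_nhds one_pos)).and hp |>.mono fun i ⟨h, hpi⟩ =>
      (div_pos_iff_of_pos_right hpi).1 h
  refine tendsto_of_tendsto_of_tendsto_of_le_of_le' (hlog hLp) (hlog hUp) ?_ ?_
  all_goals filter_upwards [hL, hU, hp, hk, hlow, hup] with i hLi hUi hpi hki hlowi hupi
  all_goals
    have hρ : 0 < ρ i := (pow_pos hLi _).trans_le hlowi
    have hki' : (0 : ℝ) < k i := mod_cast hki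
  · rw [log_div hLi.ne' hpi.ne', sub_le_sub_iff_right, le_div_iff₀ hki', mul_comm, ← log_pow]
    exact log_le_log (pow_pos hLi _) hlowi
  · rw [log_div hUi.ne' hpi.ne', sub_le_sub_iff_right, div_le_iff₀ hki', mul_comm, ← log_pow]
    exact log_le_log hρ hupi

theorem tendsto_log_factorial_sub_div :
    Tendsto (fun n : ℕ => (log n ! - (n * log n - n)) / n) atTop (𝓝 0) := by
  have hstirling : Tendsto (fun n : ℕ => log (Stirling.stirlingSeq n) / n) atTop (𝓝 0) :=
    ((continuousAt_log (by positivity)).tendsto.comp Stirling.tendsto_stirlingSeq_sqrt_pi).div_atTop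
      tendsto_natCast_atTop_atTop
  have hlog : Tendsto (fun n : ℕ => log (2 * n) / n) atTop (𝓝 0) := by
    have := (tendsto_pow_log_div_mul_add_atTop (1 / 2) 0 1 (by norm_num)).comp
      (tendsto_natCast_atTop_atTop.const_mul_atTop (two_pos (α := ℝ)))
    refine this.congr fun n => ?_
    simp
  have := hstirling.add (hlog.const_mul (1 / 2))
  rw [mul_zero, add_zero] at this
  refine this.congr' ((eventually_ne_atTop 0).mono fun n hn => ?_)
  have hn' : (n : ℝ) ≠ 0 := mod_cast hn
  rw [Stirling.log_stirlingSeq_formula, log_div hn' (exp_pos 1).ne', log_exp]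
  field_simp
  ring

theorem tendsto_atTop_of_tendsto_log_div {M : ℕ → ℝ} {c : ℝ} (hM : ∀ n, 0 ≤ M n) (hc : 0 < c)
    (h : Tendsto (fun n => log (M n) / n) atTop (𝓝 c)) : Tendsto M atTop atTop := by
  have hlog : Tendsto (fun n => log (M n)) atTop atTop := by
    refine (h.pos_mul_atTop hc tendsto_natCast_atTop_atTop).congr' ?_
    filter_upwards [eventually_ne_atTop 0] with n hn
    exact div_mul_cancel₀ _ (Nat.cast_ne_zero.2 hn)
  exact tendsto_atTop_mono (fun n => log_le_self (hM n)) hlog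

noncomputable def edgeDensity (ε : ℝ) (n : ℕ) : ℝ := (1 + ε) * √(exp 1 / n)

section EdgeDensity

variable {ε : ℝ}

theorem edgeDensity_pos (hε : -1 < ε) {n : ℕ} (hn : n ≠ 0) : 0 < edgeDensity ε n := by
  have : (0 : ℝ) < 1 + ε := by linarith
  unfold edgeDensity
  positivity

theorem log_edgeDensity (hε : -1 < ε) {n : ℕ} (hn : n ≠ 0) :
    log (edgeDensity ε n) = log (1 + ε) + (1 - log n) / 2 := by
  have hn' : (0 : ℝ) < n := by positivity
  rw [edgeDensity, log_mul (by linarith) (by positivity), log_sqrt (by positivity),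
    log_div (exp_pos 1).ne' hn'.ne', log_exp]

theorem tendsto_edgeDensity (ε : ℝ) : Tendsto (edgeDensity ε) atTop (𝓝 0) := by
  unfold edgeDensity
  have := ((continuous_sqrt.tendsto 0).comp
    (tendsto_const_div_atTop_nhds_zero_nat (exp 1))).const_mul (1 + ε)
  simpa only [Function.comp_def, sqrt_zero, mul_zero] using this

theorem mul_sqrt_le_edgeDensity_mul_choose_two (hε : 0 ≤ ε) {n : ℕ} (hn : 2 ≤ n) :
    n * √n / 4 ≤ edgeDensity ε n * n.choose 2 := by
  have hn' : (2 : ℝ) ≤ n := mod_cast hn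
  have he : 1 ≤ √(exp 1) := one_le_sqrt.2 (one_le_exp zero_le_one)
  have hε' : 1 ≤ (1 + ε) * √(exp 1) := one_le_mul_of_one_le_of_one_le (by linarith) he
  calc (n * √n / 4 : ℝ) = 1 * √n * (n / 4) := by ring
    _ ≤ (1 + ε) * √(exp 1) * √n * ((n - 1) / 2) := by gcongr ?_ * _ * ?_; linarith
    _ = edgeDensity ε n * n.choose 2 := by
      rw [edgeDensity, sqrt_div (exp_pos 1).le, Nat.cast_choose_two]
      field_simp
      rw [sq_sqrt (by positivity)]

theorem tendsto_two_mul_add_one_div_edgeDensity_mul_choose_two (hε : 0 ≤ ε) :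
    Tendsto (fun n : ℕ => (2 * n + 1 : ℝ) / (edgeDensity ε n * n.choose 2)) atTop (𝓝 0) := by
  have hlim : Tendsto (fun n : ℕ => 12 / √(n : ℝ)) atTop (𝓝 0) :=
    tendsto_const_nhds.div_atTop (tendsto_sqrt_atTop.comp tendsto_natCast_atTop_atTop)
  refine squeeze_zero' ?_ ?_ hlim
  all_goals filter_upwards [eventually_ge_atTop 2] with n hn
  all_goals
    have hn' : (2 : ℝ) ≤ n := mod_cast hn
    have hlow := mul_sqrt_le_edgeDensity_mul_choose_two hε hn
  · exact div_nonneg (by positivity) (hlow.trans' (by positivity))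
  · calc (2 * n + 1 : ℝ) / (edgeDensity ε n * n.choose 2) ≤ (3 * n) / (n * √n / 4) :=
          div_le_div₀ (by positivity) (by linarith) (by positivity) hlow
      _ = 12 / √(n : ℝ) := by field_simp; ring

noncomputable def edgeCount (ε : ℝ) (n : ℕ) : ℕ := ⌊edgeDensity ε n * n.choose 2⌋₊

theorem abs_edgeCount_sub_add_sub_le (hε : 0 ≤ ε) {n s : ℕ} {c : ℝ} (hs : s ≤ 2 * n)
    (hc₀ : 0 ≤ c) (hc : c ≤ 2 * n + 1) :
    |((edgeCount ε n - s : ℕ) : ℝ) + c - edgeDensity ε n * n.choose 2| ≤ 2 * n + 1 := by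
  have hx : 0 ≤ edgeDensity ε n * n.choose 2 := by
    unfold edgeDensity; have : (0 : ℝ) ≤ 1 + ε := by linarith
    positivity
  have hupper : ((edgeCount ε n - s : ℕ) : ℝ) ≤ edgeDensity ε n * n.choose 2 :=
    (Nat.cast_le.2 (Nat.sub_le _ _)).trans (Nat.floor_le hx)
  have hfloor := Nat.lt_floor_add_one (edgeDensity ε n * n.choose 2)
  have htsub : (edgeCount ε n : ℝ) ≤ ((edgeCount ε n - s : ℕ) : ℝ) + s := mod_cast le_tsub_add
  have hs' : (s : ℝ) ≤ 2 * n := mod_cast hs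
  rw [abs_le, edgeCount] at *
  constructor <;> linarith

theorem edgeDensity_mul_choose_two_pos (hε : 0 ≤ ε) {n : ℕ} (hn : 2 ≤ n) :
    0 < edgeDensity ε n * n.choose 2 :=
  (mul_sqrt_le_edgeDensity_mul_choose_two hε hn).trans_lt' (by positivity)

theorem tendsto_edgeCount_sub_add_div (hε : 0 ≤ ε) {s : ℕ → ℕ} {c : ℕ → ℝ}
    (hs : ∀ n, s n ≤ 2 * n) (hc₀ : ∀ n, 0 ≤ c n) (hc : ∀ n, c n ≤ 2 * n + 1) :
    Tendsto (fun n => (((edgeCount ε n - s n : ℕ) : ℝ) + c n) / (edgeDensity ε n * n.choose 2))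
      atTop (𝓝 1) :=
  tendsto_div_of_abs_sub_le
    ((eventually_ge_atTop 2).mono fun _ hn => (edgeDensity_mul_choose_two_pos hε hn).ne')
    (.of_forall fun n => abs_edgeCount_sub_add_sub_le hε (hs n) (hc₀ n) (hc n))
    (tendsto_two_mul_add_one_div_edgeDensity_mul_choose_two hε)

theorem eventually_two_mul_le_edgeCount (hε : 0 ≤ ε) : ∀ᶠ n in atTop, 2 * n ≤ edgeCount ε n := by
  filter_upwards [(tendsto_two_mul_add_one_div_edgeDensity_mul_choose_two hε).eventually
    (eventually_lt_nhds one_pos), eventually_ge_atTop 2] with n hlt hn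
  rw [div_lt_one (edgeDensity_mul_choose_two_pos hε hn)] at hlt
  exact Nat.le_floor (by push_cast; linarith)

variable {t : ℕ → ℕ}

theorem eventually_edgeCount_sub_add_le_choose_two (hε : 0 ≤ ε) (ht : ∀ n, t n ≤ 2 * n) :
    ∀ᶠ n in atTop, edgeCount ε n - t n + 2 * n ≤ n.choose 2 := by
  have hratio := tendsto_edgeCount_sub_add_div hε ht (c := fun n => 2 * n)
    (fun n => by positivity) (fun n => by linarith)
  have hsmall := (hratio.mul (tendsto_edgeDensity ε)).eventually (eventually_lt_nhds
    (show (1 : ℝ) * 0 < 1 by norm_num))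
  filter_upwards [hsmall, eventually_ge_atTop 2] with n hlt hn
  have hp : 0 < edgeDensity ε n := edgeDensity_pos (by linarith) (by omega)
  have hN : (0 : ℝ) < n.choose 2 := mod_cast Nat.choose_pos hn
  rw [div_mul_eq_mul_div, mul_comm _ (edgeDensity ε n), mul_div_mul_left _ _ hp.ne',
    div_lt_one hN] at hlt
  exact_mod_cast hlt.le

theorem tendsto_log_containmentProb_div_sub_log_edgeDensity (hε : 0 ≤ ε)
    (ht : ∀ n, t n ≤ 2 * n) :
    Tendsto (fun n => log (containmentProb (n.choose 2) (2 * n) (edgeCount ε n - t n)) / (2 * n : ℕ)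
      - log (edgeDensity ε n)) atTop (𝓝 0) := by
  set N : ℕ → ℝ := fun n => n.choose 2
  set x : ℕ → ℝ := fun n => edgeDensity ε n * N n
  set a : ℕ → ℕ := fun n => edgeCount ε n - t n
  have hfit := eventually_edgeCount_sub_add_le_choose_two hε ht
  have hN : ∀ᶠ n in atTop, 0 < N n :=
    (eventually_ge_atTop 2).mono fun n hn => Nat.cast_pos.2 (Nat.choose_pos hn)
  have hp : ∀ᶠ n in atTop, 0 < edgeDensity ε n :=
    (eventually_ne_atTop 0).mono fun n hn => edgeDensity_pos (by linarith) hn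
  have hlower : Tendsto (fun n => ((a n : ℝ) + 1) / x n) atTop (𝓝 1) :=
    tendsto_edgeCount_sub_add_div hε ht (fun _ => zero_le_one) (fun n => by linarith)
  have hupper : Tendsto (fun n => ((a n : ℝ) + (2 * n : ℕ)) / x n) atTop (𝓝 1) := by
    push_cast
    exact tendsto_edgeCount_sub_add_div hε ht (fun n => by positivity) (fun n => by linarith)
  have hshift : Tendsto (fun n => (N n + 1 - (2 * n : ℕ)) / N n) atTop (𝓝 1) := by
    refine tendsto_div_of_abs_sub_le (b := fun n => 2 * n + 1) (hN.mono fun n h => h.ne')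
      (.of_forall fun n => ?_) ?_
    · rw [abs_le]; push_cast; constructor <;> linarith
    · have := (tendsto_two_mul_add_one_div_edgeDensity_mul_choose_two hε).mul
        (tendsto_edgeDensity ε)
      rw [zero_mul] at this
      refine this.congr' (hp.mono fun n hpn => ?_)
      simp only [N]
      field_simp
  refine tendsto_log_div_sub_log_of_pow_le_of_le_pow (L := fun n => ((a n : ℝ) + 1) / N n)
    (U := fun n => ((a n : ℝ) + (2 * n : ℕ)) / (N n + 1 - (2 * n : ℕ)))
    (hN.mono fun n h => by positivity) hp
    ((eventually_gt_atTop 0).mono fun n hn => by omega)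
    (hfit.mono fun n h => pow_le_containmentProb h) (hfit.mono fun n h => containmentProb_le_pow h)
    ?_ ?_
  · exact hlower.congr fun n => by ring
  · have := hupper.div hshift one_ne_zero
    rw [div_one] at this
    refine this.congr' (hN.mono fun n hNn => ?_)
    simp only [Pi.div_apply, x]
    field_simp

theorem tendsto_log_factorial_mul_containmentProb_div (hε : 0 ≤ ε) (ht : ∀ n, t n ≤ 2 * n) :
    Tendsto (fun n => log (n ! * containmentProb (n.choose 2) (2 * n) (edgeCount ε n - t n)) / n)
      atTop (𝓝 (2 * log (1 + ε))) := by
  have := tendsto_log_factorial_sub_div.add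
    ((tendsto_log_containmentProb_div_sub_log_edgeDensity hε ht).const_mul 2)
  have := this.add_const (2 * log (1 + ε))
  rw [mul_zero, add_zero, zero_add] at this
  refine this.congr' ?_
  filter_upwards [eventually_edgeCount_sub_add_le_choose_two hε ht, eventually_ne_atTop 0]
    with n hfit hn
  have hn' : (n : ℝ) ≠ 0 := mod_cast hn
  rw [log_mul (mod_cast n.factorial_ne_zero) (containmentProb_pos hfit).ne',
    log_edgeDensity (by linarith) hn]
  push_cast
  field_simp
  ring

end EdgeDensity

/-- With `N = C(n,2)`, `f = 2n`, `m = ⌊(1+ε)√(e/n) N⌋` and any `t = t(n) ∈ {0,…,f}`, the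
quantity `M = n! C(N-f, m-t)/C(N, m+f-t)` satisfies `M = (1+ε)^{(2-o(1))n}`, i.e.
`log M / (n log(1+ε)) → 2`; in particular `M → ∞`. -/
theorem expected_copies_superexponential (ε : ℝ) (hε : 0 < ε)
    (t : ℕ → ℕ) (ht : ∀ n, t n ≤ 2 * n) :
    let M : ℕ → ℝ := fun n =>
      (n.factorial : ℝ) *
        (((n.choose 2 - 2 * n).choose
          (⌊(1 + ε) * Real.sqrt (Real.exp 1 / n) * (n.choose 2 : ℝ)⌋₊ - t n) : ℕ) : ℝ) /
        (((n.choose 2).choose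
          (⌊(1 + ε) * Real.sqrt (Real.exp 1 / n) * (n.choose 2 : ℝ)⌋₊ + 2 * n - t n) : ℕ) : ℝ);
    Tendsto (fun n : ℕ => Real.log (M n) / ((n : ℝ) * Real.log (1 + ε)))
        atTop (nhds 2) ∧
      Tendsto M atTop atTop := by
  intro M
  have hM : ∀ᶠ n in atTop,
      n ! * containmentProb (n.choose 2) (2 * n) (edgeCount ε n - t n) = M n := by
    -- truncated subtraction: `m + 2n - t = (m - t) + 2n` needs `t ≤ m`
    filter_upwards [eventually_two_mul_le_edgeCount hε.le] with n hn
    rw [containmentProb, ← Nat.sub_add_comm ((ht n).trans hn), ← mul_div_assoc]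
    rfl
  have hlog := (tendsto_log_factorial_mul_containmentProb_div hε.le ht).congr'
    (hM.mono fun n h => by rw [h])
  have hlog_pos : 0 < log (1 + ε) := log_pos (by linarith)
  refine ⟨?_, tendsto_atTop_of_tendsto_log_div (fun n => by positivity) (by positivity) hlog⟩
  convert hlog.div_const (log (1 + ε)) using 2 with n
  · rw [div_div]
  · field_simp
end
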